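/- arXiv:2511.04826 — 5 statements merged into one kernel-verified Lean document; each statement's English description precedes it below -/
import Mathlib

section
/- Let G be a simple graph with at most m edges and with no cycle of length strictly less than ℓ. Then for every positive integer α, the number of distinct cycles of G (identified with their edge sets) of length at most α·ℓ is at most (2m)^{2α}. -/
/-- A finset of edges `C` is (the edge set of) a cycle of the simple graph `G`. -/
def IsCycleSet {V : Type*} [DecidableEq V] (G : SimpleGraph V) (C : Finset (Sym2 V)) : Prop :=
  ∃ (u : V) (w : G.Walk u u), w.IsCycle ∧ C = w.edges.toFinset

/-!
A cycle of length `k ≤ αℓ` is encoded by the `2α` darts it traverses at the positions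
`⌊ik/(2α)⌋`, so the code takes at most `(2m)^(2α)` values. Between two consecutive sampled darts
the cycle runs along a path of length less than `ℓ/2`. Since the girth is at least `ℓ`, two paths
with the same endpoints and total length below `ℓ` coincide, so the code determines the edge set.
-/

theorem Nat.exists_le_lt_succ_of_le_of_lt (f : ℕ → ℕ) {n j : ℕ} (h0 : f 0 ≤ j) (hn : j < f n) :
    ∃ i < n, f i ≤ j ∧ j < f (i + 1) := by
  induction n with
  | zero => omega
  | succ n ih =>
    by_cases h : f n ≤ j
    · exact ⟨n, n.lt_succ_self, h, hn⟩
    · obtain ⟨i, hi, hfi⟩ := ih (not_le.mp h)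
      exact ⟨i, hi.trans n.lt_succ_self, hfi⟩

theorem Nat.two_mul_succ_mul_div_sub_lt {n k ℓ : ℕ} (hk : 0 < k) (h : 2 * k ≤ n * ℓ) (i : ℕ) :
    2 * ((i + 1) * k / n - (i * k / n + 1)) < ℓ := by
  have hn : 0 < n := Nat.pos_of_ne_zero (by rintro rfl; omega)
  have h1 : n * ((i + 1) * k / n) ≤ i * k + k := by rw [← Nat.succ_mul]; exact Nat.mul_div_le _ _
  have h2 : i * k < n * (i * k / n + 1) := Nat.lt_mul_div_succ _ hn
  refine Nat.lt_of_mul_lt_mul_left (a := n) ?_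
  generalize (i + 1) * k / n = b at h1 ⊢
  generalize i * k / n + 1 = a at h2 ⊢
  obtain hb | ⟨c, rfl⟩ := (le_total b a).imp Nat.sub_eq_zero_of_le Nat.exists_eq_add_of_le
  · rw [hb]; nlinarith
  · rw [Nat.add_sub_cancel_left]; nlinarith

theorem Nat.mul_div_lt_of_lt {n k i : ℕ} (hi : i < n) (hk : 0 < k) : i * k / n < k :=
  Nat.div_lt_of_lt_mul (Nat.mul_lt_mul_of_pos_right hi hk)

theorem Set.ncard_image_le_ncard_image_of_eq {α β γ : Type*} {s : Set α} {f : α → β} {g : α → γ}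
    (hf : (f '' s).Finite) (h : ∀ x ∈ s, ∀ y ∈ s, f x = f y → g x = g y) :
    (g '' s).ncard ≤ (f '' s).ncard := by
  rcases s.eq_empty_or_nonempty with rfl | ⟨x₀, -⟩
  · simp
  have : Nonempty α := ⟨x₀⟩
  refine Set.ncard_le_ncard_of_injOn (f ∘ Function.invFunOn g s) ?_ ?_ hf
  · rintro _ ⟨x, hx, rfl⟩
    exact ⟨_, Function.invFunOn_mem ⟨x, hx, rfl⟩, rfl⟩
  · rintro _ ⟨x, hx, rfl⟩ _ ⟨y, hy, rfl⟩ hxy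
    rw [← Function.invFunOn_eq (f := g) ⟨x, hx, rfl⟩, ← Function.invFunOn_eq (f := g) ⟨y, hy, rfl⟩]
    exact h _ (Function.invFunOn_mem ⟨x, hx, rfl⟩) _ (Function.invFunOn_mem ⟨y, hy, rfl⟩) hxy

theorem List.getElem_mem_take_drop {α : Type*} (l : List α) {a m j : ℕ} (haj : a ≤ j)
    (hj : j < a + m) (hjl : j < l.length) : l[j] ∈ (l.drop a).take m := by
  rw [List.mem_iff_getElem]
  exact ⟨j - a, by simp; omega, by simp [Nat.add_sub_cancel' haj]⟩

namespace SimpleGraph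
variable {V : Type*} {G : SimpleGraph V}
namespace Walk

theorem IsPath.eq_of_length_add_length_lt_egirth {u v : V} {p q : G.Walk u v} (hp : p.IsPath)
    (hq : q.IsPath) (h : ((p.length + q.length : ℕ) : ℕ∞) < G.egirth) : p = q := by
  by_contra hne
  obtain ⟨_, _, p', q', hp', hq', hc⟩ := hp.exists_isCycle_of_ne hq hne
  have hle : (p'.append q'.reverse).length ≤ p.length + q.length := by
    rw [length_append, length_reverse]
    exact add_le_add (length_le_of_isSubwalk hp') (length_le_of_isSubwalk hq')
  exact (egirth_le_length hc).not_gt (h.trans_le' (by exact_mod_cast hle))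

theorem IsTrail.eq_of_getVert_eq {u v : V} {w : G.Walk u v} (hw : w.IsTrail) {i j : ℕ}
    (hi : i < w.length) (hj : j < w.length) (h0 : w.getVert i = w.getVert j)
    (h1 : w.getVert (i + 1) = w.getVert (j + 1)) : i = j := by
  have := hw.edges_nodup.getElem_inj_iff (i := i) (j := j) (hi := by simpa) (hj := by simpa)
  rw [getElem_edges, getElem_edges, h0, h1] at this
  exact this.mp rfl

theorem IsCycle.take_drop_edges_subset {u u' : V} {w : G.Walk u u} {w' : G.Walk u' u'}
    (hw : w.IsCycle) (hw' : w'.IsCycle) {a b a' b' : ℕ} (ha : 0 < a) (hab : a ≤ b)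
    (ha' : 0 < a') (hab' : a' ≤ b') (hstart : w.getVert a = w'.getVert a')
    (hend : w.getVert b = w'.getVert b') (hlen : ((b - a + (b' - a') : ℕ) : ℕ∞) < G.egirth) :
    (w.edges.drop a).take (b - a) ⊆ w'.edges := by
  have hp := (hw.isPath_drop ha).take (b - a)
  have hq := (hw'.isPath_drop ha').take (b' - a')
  have hpend : (w.drop a).getVert (b - a) = w.getVert b := by
    rw [drop_getVert, Nat.add_sub_cancel' hab]
  have hqend : (w'.drop a').getVert (b' - a') = w.getVert b := by
    rw [drop_getVert, Nat.add_sub_cancel' hab', hend]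
  have hpq := IsPath.eq_of_length_add_length_lt_egirth ((isPath_copy _ rfl hpend).mpr hp)
    ((isPath_copy _ hstart.symm hqend).mpr hq) <| hlen.trans_le' <| by
      simp only [length_copy, take_length, drop_length]
      exact_mod_cast add_le_add (min_le_left _ _) (min_le_left _ _)
  have hsub := ((w'.drop a').isSubwalk_take (b' - a')).trans (w'.isSubwalk_drop a')
  rw [← edges_drop, ← edges_take, ← edges_copy _ rfl hpend, hpq, edges_copy]
  exact hsub.edges_subset

theorem IsCycle.edges_subset_of_getVert_sample_eq {u u' : V} {w : G.Walk u u} {w' : G.Walk u' u'}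
    (hw : w.IsCycle) (hw' : w'.IsCycle) {n ℓ : ℕ} (hℓ : (ℓ : ℕ∞) ≤ G.egirth)
    (hk : 2 * w.length ≤ n * ℓ) (hk' : 2 * w'.length ≤ n * ℓ)
    (hsample : ∀ i < n, w.getVert (i * w.length / n) = w'.getVert (i * w'.length / n) ∧
      w.getVert (i * w.length / n + 1) = w'.getVert (i * w'.length / n + 1)) :
    w.edges ⊆ w'.edges := by
  have hpos : 0 < w.length := by have := hw.three_le_length; omega
  have hpos' : 0 < w'.length := by have := hw'.three_le_length; omega
  have hn : 0 < n := Nat.pos_of_ne_zero (by rintro rfl; omega)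
  have hsample_le : ∀ i ≤ n, w.getVert (i * w.length / n) = w'.getVert (i * w'.length / n) := by
    intro i hi
    rcases hi.lt_or_eq with hi | rfl
    · exact (hsample i hi).1
    · rw [Nat.mul_div_cancel_left _ hn, Nat.mul_div_cancel_left _ hn, getVert_length,
        getVert_length]
      simpa [getVert_zero] using (hsample 0 hn).1
  intro e he
  obtain ⟨j, hj, rfl⟩ := List.getElem_of_mem he
  obtain ⟨i, hi, hij, hji⟩ := Nat.exists_le_lt_succ_of_le_of_lt (fun i => i * w.length / n) (n := n)
    (j := j) (by simp) (by simpa [Nat.mul_div_cancel_left _ hn] using hj)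
  rcases hij.eq_or_lt with rfl | hij
  · rw [getElem_edges, (hsample i hi).1, (hsample i hi).2,
      ← getElem_edges (by simpa using Nat.mul_div_lt_of_lt hi hpos')]
    exact List.getElem_mem _
  -- otherwise the `i`-th and `(i+1)`-st sampled darts of `w'`, hence of `w`, coincide
  have hlt' : i * w'.length / n < (i + 1) * w'.length / n := by
    by_contra hle
    have hi1 : i + 1 < n := by
      by_contra hi1
      rw [show i + 1 = n by omega, Nat.mul_div_cancel_left _ hn] at hle
      exact hle (Nat.mul_div_lt_of_lt hi hpos')
    have heq : (i + 1) * w'.length / n = i * w'.length / n :=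
      le_antisymm (not_lt.mp hle) (Nat.div_le_div_right (Nat.mul_le_mul_right _ (by omega)))
    have := hw.isTrail.eq_of_getVert_eq (Nat.mul_div_lt_of_lt hi hpos)
      (Nat.mul_div_lt_of_lt hi1 hpos) (by rw [(hsample i hi).1, (hsample _ hi1).1, heq])
      (by rw [(hsample i hi).2, (hsample _ hi1).2, heq])
    omega
  refine hw.take_drop_edges_subset hw' (a := i * w.length / n + 1) (a' := i * w'.length / n + 1)
    (Nat.succ_pos _) (by omega) (Nat.succ_pos _) hlt'
    (hsample i hi).2 (hsample_le _ hi) ?_ (List.getElem_mem_take_drop _ hij (by omega) hj)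
  have := Nat.two_mul_succ_mul_div_sub_lt hpos hk i
  have := Nat.two_mul_succ_mul_div_sub_lt hpos' hk' i
  exact hℓ.trans_lt' (by exact_mod_cast (by omega))

def sampleDarts {u v : V} (w : G.Walk u v) (n : ℕ) (d : G.Dart) : Fin n → G.Dart :=
  fun i => w.darts.getD (i * w.length / n) d

theorem toProd_sampleDarts {u v : V} (w : G.Walk u v) {n : ℕ} (d : G.Dart) (i : Fin n)
    (hw : 0 < w.length) :
    (w.sampleDarts n d i).toProd =
      (w.getVert (i * w.length / n), w.getVert (i * w.length / n + 1)) := by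
  rw [sampleDarts, List.getD_eq_getElem _ _ (by simpa using Nat.mul_div_lt_of_lt i.2 hw),
    darts_getElem_eq_getVert]

end Walk

open Walk in
theorem ncard_image_edges_toFinset_le [Fintype V] [DecidableEq V] [DecidableRel G.Adj] (n ℓ : ℕ)
    (hℓ : (ℓ : ℕ∞) ≤ G.egirth) :
    ((fun x : Σ u, G.Walk u u => x.2.edges.toFinset) ''
      {x | x.2.IsCycle ∧ 2 * x.2.length ≤ n * ℓ}).ncard ≤ Fintype.card G.Dart ^ n := by
  rcases isEmpty_or_nonempty G.Dart with hD | ⟨⟨d⟩⟩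
  · have : {x : Σ u, G.Walk u u | x.2.IsCycle ∧ 2 * x.2.length ≤ n * ℓ} = ∅ :=
      Set.eq_empty_of_forall_notMem fun x hx => hD.false
        (x.2.darts[0]'(by rw [length_darts]; have := hx.1.three_le_length; omega))
    simp [this]
  calc _ ≤ ((fun x : Σ u, G.Walk u u => x.2.sampleDarts n d) ''
          {x | x.2.IsCycle ∧ 2 * x.2.length ≤ n * ℓ}).ncard := by
        refine Set.ncard_image_le_ncard_image_of_eq (Set.toFinite _) ?_
        rintro ⟨u, w⟩ ⟨hw, hk⟩ ⟨u', w'⟩ ⟨hw', hk'⟩ hcode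
        have hsample : ∀ i < n, w.getVert (i * w.length / n) = w'.getVert (i * w'.length / n) ∧
            w.getVert (i * w.length / n + 1) = w'.getVert (i * w'.length / n + 1) := by
          intro i hi
          have := congrArg Dart.toProd (congrFun hcode ⟨i, hi⟩)
          rwa [toProd_sampleDarts _ _ _ (by have := hw.three_le_length; omega),
            toProd_sampleDarts _ _ _ (by have := hw'.three_le_length; omega), Prod.mk.injEq] at this
        ext e
        simp only [List.mem_toFinset]
        exact ⟨fun he => hw.edges_subset_of_getVert_sample_eq hw' hℓ hk hk' hsample he,
          fun he => hw'.edges_subset_of_getVert_sample_eq hw hℓ hk' hk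
            (fun i hi => ⟨(hsample i hi).1.symm, (hsample i hi).2.symm⟩) he⟩
    _ ≤ Nat.card (Fin n → G.Dart) := Set.ncard_le_card _
    _ = Fintype.card G.Dart ^ n := by simp [Nat.card_eq_fintype_card]

end SimpleGraph

open SimpleGraph Walk in
theorem cycle_counting_bound_general {V : Type*} [Fintype V] [DecidableEq V]
    (G : SimpleGraph V) [DecidableRel G.Adj] (m ℓ : ℕ)
    (hedges : G.edgeFinset.card ≤ m)
    (hgirth : ∀ C : Finset (Sym2 V), IsCycleSet G C → ℓ ≤ C.card)
    (α : ℕ) :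
    {C : Finset (Sym2 V) | IsCycleSet G C ∧ C.card ≤ α * ℓ}.ncard ≤ (2 * m) ^ (2 * α) := by
  have hcard {u : V} {w : G.Walk u u} (hw : w.IsCycle) : w.edges.toFinset.card = w.length := by
    rw [List.toFinset_card_of_nodup hw.isTrail.edges_nodup, length_edges]
  have hegirth : (ℓ : ℕ∞) ≤ G.egirth :=
    le_egirth.mpr fun u w hw => by exact_mod_cast hcard hw ▸ hgirth _ ⟨u, w, hw, rfl⟩
  calc _ ≤ ((fun x : Σ u, G.Walk u u => x.2.edges.toFinset) ''
          {x | x.2.IsCycle ∧ 2 * x.2.length ≤ (2 * α) * ℓ}).ncard := by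
        refine Set.ncard_le_ncard ?_ (Set.toFinite _)
        rintro C ⟨⟨u, w, hw, rfl⟩, hC⟩
        refine ⟨⟨u, w⟩, ⟨hw, ?_⟩, rfl⟩
        rw [hcard hw] at hC
        dsimp only
        rw [mul_assoc]
        omega
    _ ≤ Fintype.card G.Dart ^ (2 * α) := ncard_image_edges_toFinset_le _ _ hegirth
    _ ≤ (2 * m) ^ (2 * α) :=
        Nat.pow_le_pow_left (by rw [G.dart_card_eq_twice_card_edges]; omega) _

/-- If `G` has at most `m` edges and no cycle of length strictly less than `ℓ`, then for every
positive integer `α` the number of cycles of `G` of length at most `α·ℓ` is at most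
`(2m)^(2α)`. -/
theorem cycle_counting_bound {V : Type*} [Fintype V] [DecidableEq V]
    (G : SimpleGraph V) [DecidableRel G.Adj] (m ℓ : ℕ) (hm : 0 < m) (hℓ : 0 < ℓ)
    (hedges : G.edgeFinset.card ≤ m)
    (hgirth : ∀ C : Finset (Sym2 V), IsCycleSet G C → ℓ ≤ C.card)
    (α : ℕ) (hα : 0 < α) :
    {C : Finset (Sym2 V) | IsCycleSet G C ∧ C.card ≤ α * ℓ}.ncard ≤ (2 * m) ^ (2 * α) :=
  cycle_counting_bound_general G m ℓ hedges hgirth α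
end

section
/- Let G be a simple graph with edge set E, and fix an injective labeling of the edges e_1, …, e_m by a linear order. Let 𝒞 be an arbitrary set of cycles of G (each identified with its edge set). Let E' be obtained from E by simultaneously deleting, for every cycle C ∈ 𝒞, the edge of C with the largest label. Then (1) every cycle in 𝒞 has at least one edge removed, i.e., meets E \ E'; and (2) for all vertices u, v of G, u and v are connected by a path using only edges of E' if and only if they are connected by a path using edges of E. In particular the connected components of the spanning subgraph with edge set E' equal those of G. -/
private lemma reach_of_walk {V : Type*} {G : SimpleGraph V} {R : V → V → Prop}
    (hrefl : ∀ x, R x x) (htrans : ∀ {x y z : V}, R x y → R y z → R x z) :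
    ∀ {a b : V} (w : G.Walk a b), (∀ x y : V, s(x, y) ∈ w.edges → R x y) → R a b := by
  intro a b w
  induction w with
  | nil => intro _; exact hrefl _
  | cons h q ih =>
    intro hyp
    exact htrans (hyp _ _ (by simp)) (ih fun x y hm => hyp x y (by simp [hm]))

private lemma cycle_detour {V : Type*} {G : SimpleGraph V} {R : V → V → Prop}
    (hrefl : ∀ x, R x x) (htrans : ∀ {x y z : V}, R x y → R y z → R x z)
    {u v : V} :
    ∀ {a b : V} (w : G.Walk a b), w.edges.Nodup → s(u, v) ∈ w.edges →
      (∀ x y : V, s(x, y) ∈ w.edges → s(x, y) ≠ s(u, v) → R x y) →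
      (R a u ∧ R v b) ∨ (R a v ∧ R u b) := by
  intro a b w
  induction w with
  | nil => simp
  | @cons a c b h q ih =>
    intro hnd he hother
    rw [SimpleGraph.Walk.edges_cons] at he hnd
    rw [List.nodup_cons] at hnd
    by_cases hcase : s(a, c) = s(u, v)
    · have hq : R c b := by
        refine reach_of_walk hrefl htrans q (fun x y hm => ?_)
        refine hother x y (by simp [hm]) ?_
        intro hxy
        exact hnd.1 (by rw [hcase, ← hxy]; exact hm)
      rcases Sym2.eq_iff.mp hcase with ⟨rfl, rfl⟩ | ⟨rfl, rfl⟩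
      · exact Or.inl ⟨hrefl _, hq⟩
      · exact Or.inr ⟨hrefl _, hq⟩
    · have he' : s(u, v) ∈ q.edges := by
        rcases List.mem_cons.mp he with h1 | h1
        · exact absurd h1.symm hcase
        · exact h1
      have hac : R a c := hother a c (by simp) hcase
      rcases ih hnd.2 he' (fun x y hm hne => hother x y (by simp [hm]) hne) with
        ⟨h1, h2⟩ | ⟨h1, h2⟩
      · exact Or.inl ⟨htrans hac h1, h2⟩
      · exact Or.inr ⟨htrans hac h1, h2⟩

/-- Delete, from the edge set of `G`, the largest-labelled edge of each cycle in a family `𝒞`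
of cycles. Then every cycle of `𝒞` loses at least one edge, and the connectivity (hence the
connected components) of the graph is unchanged. -/
theorem delete_largest_edge_of_each_cycle {V : Type*} [Fintype V] [DecidableEq V]
    (G : SimpleGraph V) [DecidableRel G.Adj]
    {L : Type*} [LinearOrder L] (lab : Sym2 V → L)
    (hinj : Set.InjOn lab ↑G.edgeFinset)
    (𝒞 : Set (Finset (Sym2 V))) (h𝒞 : ∀ C ∈ 𝒞, IsCycleSet G C)
    (D : Finset (Sym2 V))
    (hD : ∀ e : Sym2 V, e ∈ D ↔ ∃ C ∈ 𝒞, e ∈ C ∧ ∀ f ∈ C, lab f ≤ lab e)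
    (E' : Finset (Sym2 V)) (hE' : E' = G.edgeFinset \ D) :
    (∀ C ∈ 𝒞, ∃ e ∈ C, e ∈ D) ∧
      (∀ u v : V,
        (SimpleGraph.fromEdgeSet (↑E' : Set (Sym2 V))).Reachable u v ↔ G.Reachable u v) := by
  subst hE'
  set H := SimpleGraph.fromEdgeSet (↑(G.edgeFinset \ D) : Set (Sym2 V)) with hH
  have part1 : ∀ C ∈ 𝒞, ∃ e ∈ C, e ∈ D := by
    intro C hC
    obtain ⟨r, w, hw, hCeq⟩ := h𝒞 C hC
    have hne : C.Nonempty := by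
      rw [hCeq]
      have h0 : w.edges ≠ [] := by
        intro h0
        have h3 := hw.three_le_length
        rw [← SimpleGraph.Walk.length_edges, h0] at h3
        simp at h3
      exact ⟨w.edges.head h0, List.mem_toFinset.mpr (List.head_mem h0)⟩
    obtain ⟨e, heC, hmax⟩ := C.exists_max_image lab hne
    exact ⟨e, heC, (hD e).mpr ⟨C, hC, heC, hmax⟩⟩
  have hrefl : ∀ x : V, H.Reachable x x := fun x => SimpleGraph.Reachable.refl x
  have htrans : ∀ {x y z : V}, H.Reachable x y → H.Reachable y z → H.Reachable x z :=
    fun h1 h2 => h1.trans h2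
  have key : ∀ n (e : Sym2 V), e ∈ G.edgeFinset →
      (G.edgeFinset.filter (fun f => lab f < lab e)).card < n →
      ∀ u v : V, e = s(u, v) → H.Reachable u v := by
    intro n
    induction n with
    | zero => intro e _ h; omega
    | succ n ih =>
      intro e he hcard u v hev
      subst hev
      by_cases heD : s(u, v) ∈ D
      · obtain ⟨C, hC, heC, hmax⟩ := (hD _).mp heD
        obtain ⟨r, w, hw, hCeq⟩ := h𝒞 C hC
        have hstrict : ∀ f ∈ C, f ≠ s(u, v) → lab f < lab s(u, v) := by
          intro f hf hne
          have hfE : f ∈ G.edgeFinset := by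
            rw [hCeq] at hf
            simpa [SimpleGraph.mem_edgeFinset] using
              w.edges_subset_edgeSet (List.mem_toFinset.mp hf)
          rcases lt_or_eq_of_le (hmax f hf) with hlt | heq
          · exact hlt
          · exact absurd (hinj (Finset.mem_coe.mpr hfE) (Finset.mem_coe.mpr he) heq) hne
        have hreach : ∀ x y : V, s(x, y) ∈ w.edges → s(x, y) ≠ s(u, v) → H.Reachable x y := by
          intro x y hm hne
          have hfC : s(x, y) ∈ C := hCeq ▸ List.mem_toFinset.mpr hm
          have hfE : s(x, y) ∈ G.edgeFinset := by
            simpa [SimpleGraph.mem_edgeFinset] using w.edges_subset_edgeSet hm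
          have hlt := hstrict _ hfC hne
          have hsub : G.edgeFinset.filter (fun g => lab g < lab s(x, y)) ⊂
              G.edgeFinset.filter (fun g => lab g < lab s(u, v)) := by
            constructor
            · intro g hg
              simp only [Finset.mem_filter] at *
              exact ⟨hg.1, hg.2.trans hlt⟩
            · intro hsub'
              have hmem : s(x, y) ∈ G.edgeFinset.filter (fun g => lab g < lab s(x, y)) :=
                hsub' (by simp [Finset.mem_filter, hfE, hlt])
              simp [Finset.mem_filter] at hmem
          exact ih _ hfE (by have := Finset.card_lt_card hsub; omega) x y rfl
        have hew : s(u, v) ∈ w.edges := by rw [hCeq] at heC; exact List.mem_toFinset.mp heC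
        rcases cycle_detour hrefl htrans w hw.edges_nodup hew hreach with
          ⟨h1, h2⟩ | ⟨h1, h2⟩
        · exact h1.symm.trans h2.symm
        · exact h2.trans h1
      · have hadj : H.Adj u v := by
          rw [hH, SimpleGraph.fromEdgeSet_adj]
          refine ⟨?_, ?_⟩
          · simp only [Finset.coe_sdiff, Set.mem_diff, Finset.mem_coe]
            exact ⟨he, heD⟩
          · exact (G.mem_edgeSet.mp (SimpleGraph.mem_edgeFinset.mp he)).ne
        exact hadj.reachable
  refine ⟨part1, fun u v => ⟨fun h => ?_, fun h => ?_⟩⟩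
  · have hle : H ≤ G := by
      rw [hH]
      intro x y hxy
      rw [SimpleGraph.fromEdgeSet_adj] at hxy
      have hm := hxy.1
      simp only [Finset.coe_sdiff, Set.mem_diff, Finset.mem_coe,
        SimpleGraph.mem_edgeFinset] at hm
      exact G.mem_edgeSet.mp hm.1
    exact h.mono hle
  · obtain ⟨p⟩ := h
    exact reach_of_walk hrefl htrans p (fun x y hm =>
      key _ _ (by simpa [SimpleGraph.mem_edgeFinset] using p.edges_subset_edgeSet hm)
        (Nat.lt_succ_self _) x y rfl)
end

section
/- Let M be a matroid, let E be a finite subset of its ground set equipped with a linear order, and let 𝒞 be an arbitrary set of circuits of M, each contained in E. Let D = { the largest element of C : C ∈ 𝒞 } and let E' = E \ D. Then (1) every circuit in 𝒞 has at least one element removed, i.e., meets D; and (2) the rank of E' in M equals the rank of E in M. -/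
/-- A circuit of a matroid: a minimal dependent subset of the ground set. -/
def IsCircuitOf {α : Type*} (M : Matroid α) (C : Set α) : Prop :=
  C ⊆ M.E ∧ ¬ M.Indep C ∧ ∀ D : Set α, D ⊂ C → M.Indep D

/-- The rank of a set `S` in a matroid `M`: the maximum cardinality of an independent subset
of `S`. -/
noncomputable def matroidRank {α : Type*} (M : Matroid α) (S : Set α) : ℕ :=
  sSup {n : ℕ | ∃ I : Set α, I ⊆ S ∧ M.Indep I ∧ I.ncard = n}


/-!
The largest element `e` of a circuit `C` lies in the closure of `C \ {e}`, all of whose elements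
are smaller than `e`. So every deleted element is spanned by smaller elements of `E`, and
well-founded induction along the order of the finite set `E` shows that `E \ D` spans `E`;
hence both sets have the same rank.
-/

open Set

theorem IsCircuitOf.isCircuit {α : Type*} {M : Matroid α} {C : Set α} (hC : IsCircuitOf M C) :
    M.IsCircuit C :=
  Matroid.isCircuit_iff_forall_ssubset.2 ⟨⟨hC.2.1, hC.1⟩, hC.2.2⟩

namespace Matroid

variable {α : Type*} {M : Matroid α}

theorem matroidRank_eq_toNat_eRk {S : Set α} (hS : S.Finite) :
    matroidRank M S = (M.eRk S).toNat := by
  refine IsGreatest.csSup_eq ⟨?_, ?_⟩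
  · obtain ⟨I, hI⟩ := M.exists_isBasis' S
    exact ⟨I, hI.subset, hI.indep, by rw [ncard_def, hI.encard_eq_eRk]⟩
  · rintro n ⟨J, hJS, hJ, rfl⟩
    rw [ncard_def]
    exact ENat.toNat_le_toNat (hJ.encard_le_eRk_of_subset hJS)
      ((M.eRk_le_encard S).trans_lt hS.encard_lt_top).ne

theorem IsCircuit.mem_closure_setOf_lt_of_isGreatest [PartialOrder α] {C E : Set α} {e : α}
    (hC : M.IsCircuit C) (hCE : C ⊆ E) (he : IsGreatest C e) :
    e ∈ M.closure {f ∈ E | f < e} :=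
  M.closure_subset_closure (show C \ {e} ⊆ {f ∈ E | f < e} from
    fun _ ⟨hfC, hfe⟩ ↦ ⟨hCE hfC, (he.2 hfC).lt_of_ne hfe⟩)
    (hC.mem_closure_sdiff_singleton_of_mem he.1)

theorem subset_closure_of_forall_mem_closure_setOf_lt [LT α] {E X : Set α}
    (hE : E.WellFoundedOn (· < ·))
    (h : ∀ e ∈ E \ M.closure X, e ∈ M.closure {f ∈ E | f < e}) : E ⊆ M.closure X := by
  intro e he
  refine hE.induction he fun e he ih ↦ ?_
  by_contra heX
  exact heX <| M.closure_subset_closure_of_subset_closure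
    (X := {f ∈ E | f < e}) (fun f hf ↦ ih f hf.1 hf.2) (h e ⟨he, heX⟩)

end Matroid

/-- Delete, from a finite subset `E` of the ground set of a matroid, the largest element of each
circuit in a family `𝒞` of circuits contained in `E`. Then every circuit of `𝒞` loses at least
one element, and the rank of the remaining set equals the rank of `E`. -/
theorem delete_largest_element_of_each_circuit {α : Type*} [LinearOrder α] (M : Matroid α)
    (E : Set α) (hEfin : E.Finite) (hE : E ⊆ M.E)
    (𝒞 : Set (Set α)) (h𝒞 : ∀ C ∈ 𝒞, IsCircuitOf M C ∧ C ⊆ E)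
    (D : Set α)
    (hD : ∀ e : α, e ∈ D ↔ ∃ C ∈ 𝒞, e ∈ C ∧ ∀ f ∈ C, f ≤ e) :
    (∀ C ∈ 𝒞, (C ∩ D).Nonempty) ∧ matroidRank M (E \ D) = matroidRank M E := by
  have hcirc : ∀ C ∈ 𝒞, M.IsCircuit C := fun C hC ↦ (h𝒞 C hC).1.isCircuit
  refine ⟨fun C hC ↦ ?_, ?_⟩
  · obtain ⟨e, heC, hmax⟩ :=
      exists_max_image C id (hEfin.subset (h𝒞 C hC).2) (hcirc C hC).nonempty
    exact ⟨e, heC, (hD e).2 ⟨C, hC, heC, hmax⟩⟩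
  have hspan : E ⊆ M.closure (E \ D) := by
    refine Matroid.subset_closure_of_forall_mem_closure_setOf_lt hEfin.wellFoundedOn
      fun e ⟨heE, hecl⟩ ↦ ?_
    have heD : e ∈ D := by_contra fun heD ↦
      hecl (M.subset_closure _ (sdiff_subset.trans hE) ⟨heE, heD⟩)
    obtain ⟨C, hC, heC, hmax⟩ := (hD e).1 heD
    exact (hcirc C hC).mem_closure_setOf_lt_of_isGreatest (h𝒞 C hC).2 ⟨heC, hmax⟩
  have hrk : M.eRk (E \ D) = M.eRk E :=
    (M.eRk_mono sdiff_subset).antisymm ((M.eRk_mono hspan).trans_eq (M.eRk_closure_eq _))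
  rw [Matroid.matroidRank_eq_toNat_eRk (hEfin.subset sdiff_subset),
    Matroid.matroidRank_eq_toNat_eRk hEfin, hrk]
end

section
/- Let G be a simple graph whose edge set E has exactly m edges, with m ≥ 2, and containing no cycle of length ≤ ℓ. Let p ∈ [0,1] satisfy p^ℓ = 1/m^{100}, and let C be a cycle of G of length k with ℓ < k ≤ 1.01·ℓ. Form a random subset E' ⊆ E by keeping each edge independently with probability p. Then the probability that C is the unique surviving cycle (every edge of C lies in E', and every other cycle of G has some edge outside E') is at least 1/(2·m^{101}). -/
/-- The probability, under the product Bernoulli(p) measure on subsets of the finite set `E`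
(each element kept independently with probability `p`), of the event `A`. -/
noncomputable def bernoulliSubsetProb {α : Type*} [DecidableEq α] (E : Finset α) (p : ℝ)
    (A : Set (Finset α)) : ℝ :=
  ∑ S ∈ E.powerset,
    Set.indicator A (fun S => p ^ S.card * (1 - p) ^ (E.card - S.card)) S


/-!
By the union bound, the probability is at least `p ^ #C - ∑_{C' ≠ C} p ^ #(C ∪ C')`.

For a cycle `C' ≠ C`, the symmetric difference `C ∆ C'` is a nonempty edge set in which every
vertex has even degree; a longest trail inside such a set is closed, so it contains a circuit and
has more than `ℓ` edges. Since `#C ≤ 1.01 ℓ`, this forces `#(C' \ C) > 0.99 #C' / 2`, hence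
`p ^ #(C ∪ C') ≤ p ^ #C * p ^ (0.99 #C' / 2)`.

Two trails of total length at most `ℓ` between the same vertices have the same edges, for the same
parity reason. So with `h = ℓ / 2`, a cycle of length `t` is determined by its vertices at the
positions `0, h, 2h, …`, and there are at most `(2m) ^ (t / h + 1)` such cycles. As
`p ^ ℓ = m ^ (-100)`, each length `t` contributes at most `m ^ (-41)` to the sum above, so the sum
is at most `p ^ #C / 2`, while `p ^ #C ≥ m ^ (-101)`.
-/

open SimpleGraph Finset
open scoped symmDiff

namespace Finset

variable {α : Type*} [DecidableEq α]

theorem card_symmDiff_add_two_mul_card_inter (s t : Finset α) :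
    #(s ∆ t) + 2 * #(s ∩ t) = #s + #t := by
  have hs := card_sdiff_add_card_inter s t
  have ht := card_sdiff_add_card_inter t s
  rw [inter_comm t s] at ht
  rw [Finset.symmDiff_def, card_union_of_disjoint disjoint_sdiff_sdiff]
  omega

theorem even_card_filter_symmDiff_iff (s t : Finset α) (P : α → Prop) [DecidablePred P] :
    Even #{a ∈ s ∆ t | P a} ↔ (Even #{a ∈ s | P a} ↔ Even #{a ∈ t | P a}) := by
  have hfilter : {a ∈ s ∆ t | P a} = {a ∈ s | P a} ∆ {a ∈ t | P a} := by
    ext a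
    simp only [mem_filter, mem_symmDiff]
    tauto
  rw [hfilter, ← Nat.even_add, ← card_symmDiff_add_two_mul_card_inter, Nat.even_add]
  simp

end Finset

section EvenEdgeSets

variable {V : Type*} [DecidableEq V] {G : SimpleGraph V}

def IsEvenEdgeSet (D : Finset (Sym2 V)) : Prop :=
  ∀ x : V, Even #{e ∈ D | x ∈ e}

theorem IsEvenEdgeSet.symmDiff {A B : Finset (Sym2 V)} (hA : IsEvenEdgeSet A)
    (hB : IsEvenEdgeSet B) : IsEvenEdgeSet (A ∆ B) := fun x => by
  rw [even_card_filter_symmDiff_iff]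
  exact iff_of_true (hA x) (hB x)

namespace SimpleGraph.Walk

theorem IsTrail.card_toFinset_edges {u v : V} {w : G.Walk u v} (hw : w.IsTrail) :
    #w.edges.toFinset = w.length := by
  rw [List.toFinset_card_of_nodup hw.edges_nodup, length_edges]

theorem IsTrail.length_le_card {u v : V} {w : G.Walk u v} (hw : w.IsTrail)
    {D : Finset (Sym2 V)} (hwD : ∀ e ∈ w.edges, e ∈ D) : w.length ≤ #D := by
  rw [← hw.card_toFinset_edges]
  exact card_le_card fun e he => hwD e (List.mem_toFinset.mp he)

theorem IsTrail.even_card_filter_mem_iff {u v : V} {w : G.Walk u v} (hw : w.IsTrail) (x : V) :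
    Even #{e ∈ w.edges.toFinset | x ∈ e} ↔ (u ≠ v → x ≠ u ∧ x ≠ v) := by
  rw [← hw.even_countP_edges_iff, List.countP_eq_length_filter,
    ← List.toFinset_card_of_nodup (hw.edges_nodup.filter _), List.toFinset_filter]
  simp

theorem IsTrail.isEvenEdgeSet_symmDiff {u v : V} {w₁ w₂ : G.Walk u v} (h₁ : w₁.IsTrail)
    (h₂ : w₂.IsTrail) : IsEvenEdgeSet (w₁.edges.toFinset ∆ w₂.edges.toFinset) := fun x => by
  rw [even_card_filter_symmDiff_iff, h₁.even_card_filter_mem_iff, h₂.even_card_filter_mem_iff]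

end SimpleGraph.Walk

open Walk

theorem IsCycleSet.isEvenEdgeSet {C : Finset (Sym2 V)} (hC : IsCycleSet G C) :
    IsEvenEdgeSet C := by
  obtain ⟨u, c, hc, rfl⟩ := hC
  exact fun x => (hc.isTrail.even_card_filter_mem_iff x).2 fun h => absurd rfl h

theorem lt_egirth_iff_forall_isCycleSet {ℓ : ℕ} :
    (ℓ : ℕ∞) < G.egirth ↔ ∀ C, IsCycleSet G C → ℓ < #C := by
  rw [← ENat.add_one_le_iff (ENat.natCast_ne_top ℓ), le_egirth]
  refine ⟨fun h C ⟨u, c, hc, hC⟩ => ?_, fun h u c hc => ?_⟩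
  · have := h u c hc
    rw [hC, hc.isTrail.card_toFinset_edges]
    exact_mod_cast this
  · have := h _ ⟨u, c, hc, rfl⟩
    rw [hc.isTrail.card_toFinset_edges] at this
    exact_mod_cast this

theorem IsCycleSet.coe_subset_edgeSet {C : Finset (Sym2 V)} (hC : IsCycleSet G C) :
    (C : Set (Sym2 V)) ⊆ G.edgeSet := by
  obtain ⟨u, c, -, rfl⟩ := hC
  exact fun e he => c.edges_subset_edgeSet (List.mem_toFinset.mp he)

theorem IsCycleSet.subset_edgeFinset [Fintype G.edgeSet] {C : Finset (Sym2 V)}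
    (hC : IsCycleSet G C) : C ⊆ G.edgeFinset :=
  fun _ he => mem_edgeFinset.mpr (hC.coe_subset_edgeSet he)

/-- An open trail in `D` has odd degree at its start, so some edge of `D` there is unused and the
trail can be extended backwards; trails cannot grow forever, so one of them closes up. -/
theorem exists_isCircuit_of_isEvenEdgeSet {D : Finset (Sym2 V)} (hDG : ↑D ⊆ G.edgeSet)
    (hne : D.Nonempty) (hD : IsEvenEdgeSet D) :
    ∃ (u : V) (c : G.Walk u u), c.IsCircuit ∧ ∀ e ∈ c.edges, e ∈ D := by
  obtain ⟨e₀, he₀⟩ := hne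
  induction e₀ using Sym2.ind with | _ x₀ y₀ =>
  by_contra! hno
  have grow : ∀ n, ∃ (u : V) (w : G.Walk u x₀), w.IsTrail ∧ (∀ e ∈ w.edges, e ∈ D) ∧
      w.length = n := by
    intro n
    induction n with
    | zero => exact ⟨x₀, nil, by simp, by simp, rfl⟩
    | succ n ih =>
      obtain ⟨u, w, hw, hwD, rfl⟩ := ih
      obtain ⟨e, heD, hue, hew⟩ : ∃ e ∈ D, u ∈ e ∧ e ∉ w.edges := by
        by_cases hux : u = x₀
        · subst hux
          by_cases hnil : w = nil
          · subst hnil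
            exact ⟨s(u, y₀), he₀, Sym2.mem_mk_left _ _, by simp⟩
          · obtain ⟨e, he, heD⟩ := hno u w ⟨hw, hnil⟩
            exact absurd (hwD e he) heD
        · by_contra! hall
          have hsame : {e ∈ D | u ∈ e} = {e ∈ w.edges.toFinset | u ∈ e} := by
            ext e
            simp only [mem_filter, List.mem_toFinset]
            exact ⟨fun h => ⟨hall e h.1 h.2, h.2⟩, fun h => ⟨hwD e h.1, h.2⟩⟩
          have hodd := hD u
          rw [hsame, hw.even_card_filter_mem_iff] at hodd
          exact (hodd hux).1 rfl
      obtain ⟨y, rfl⟩ := Sym2.mem_iff_exists.mp hue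
      have hadj : G.Adj y u := (G.mem_edgeSet.mp (hDG heD)).symm
      refine ⟨y, cons hadj w, ?_, ?_, rfl⟩
      · rw [isTrail_cons, Sym2.eq_swap]
        exact ⟨hw, hew⟩
      · rw [edges_cons, Sym2.eq_swap]
        exact List.forall_mem_cons.mpr ⟨heD, hwD⟩
  obtain ⟨u, w, hw, hwD, hlen⟩ := grow (#D + 1)
  have := hw.length_le_card hwD
  omega

theorem lt_card_of_isEvenEdgeSet {ℓ : ℕ} (hG : (ℓ : ℕ∞) < G.egirth) {D : Finset (Sym2 V)}
    (hDG : ↑D ⊆ G.edgeSet) (hne : D.Nonempty) (hD : IsEvenEdgeSet D) : ℓ < #D := by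
  obtain ⟨u, c, hc, hcD⟩ := exists_isCircuit_of_isEvenEdgeSet hDG hne hD
  exact_mod_cast hG.trans_le
    (hc.egirth_le_length.trans (Nat.cast_le.mpr (hc.isTrail.length_le_card hcD)))

end EvenEdgeSets

namespace SimpleGraph.Walk

variable {V : Type*} {G : SimpleGraph V}

theorem IsTrail.take {u v : V} {w : G.Walk u v} (hw : w.IsTrail) (n : ℕ) : (w.take n).IsTrail :=
  ⟨by rw [edges_take]; exact hw.edges_nodup.sublist (List.take_sublist _ _)⟩

theorem IsTrail.drop {u v : V} {w : G.Walk u v} (hw : w.IsTrail) (n : ℕ) : (w.drop n).IsTrail :=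
  ⟨by rw [edges_drop]; exact hw.edges_nodup.sublist (List.drop_sublist _ _)⟩

variable [DecidableEq V] {ℓ : ℕ}

theorem toFinset_edges_eq_union_take_drop {u v : V} (w : G.Walk u v) (n : ℕ) :
    w.edges.toFinset = (w.take n).edges.toFinset ∪ (w.drop n).edges.toFinset := by
  rw [edges_take, edges_drop, ← List.toFinset_append, List.take_append_drop]

theorem IsTrail.toFinset_edges_eq_of_length_add_le (hG : (ℓ : ℕ∞) < G.egirth) {u v : V}
    {w₁ w₂ : G.Walk u v} (h₁ : w₁.IsTrail) (h₂ : w₂.IsTrail) (hlen : w₁.length + w₂.length ≤ ℓ) :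
    w₁.edges.toFinset = w₂.edges.toFinset := by
  by_contra hne
  have hlt := lt_card_of_isEvenEdgeSet hG (D := w₁.edges.toFinset ∆ w₂.edges.toFinset)
    (fun e he => by
      rcases mem_symmDiff.mp he with ⟨he, -⟩ | ⟨he, -⟩ <;>
        exact edges_subset_edgeSet _ (List.mem_toFinset.mp he))
    (symmDiff_nonempty.mpr hne) (h₁.isEvenEdgeSet_symmDiff h₂)
  have hle : #(w₁.edges.toFinset ∆ w₂.edges.toFinset) ≤ #w₁.edges.toFinset + #w₂.edges.toFinset :=
    (card_le_card symmDiff_subset_union).trans (card_union_le _ _)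
  rw [h₁.card_toFinset_edges, h₂.card_toFinset_edges] at hle
  omega

theorem IsTrail.toFinset_edges_eq_of_getVert_mul_eq (hG : (ℓ : ℕ∞) < G.egirth) {h : ℕ}
    (hh : 0 < h) (hhℓ : 2 * h ≤ ℓ) {u v₁ v₂ : V} {w₁ : G.Walk u v₁} {w₂ : G.Walk u v₂}
    (h₁ : w₁.IsTrail) (h₂ : w₂.IsTrail) (hlen : w₁.length = w₂.length)
    (hvert : ∀ i, w₁.getVert (i * h) = w₂.getVert (i * h)) :
    w₁.edges.toFinset = w₂.edges.toFinset := by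
  induction hN : w₁.length using Nat.strong_induction_on generalizing u v₁ v₂ w₁ w₂ with
  | _ N ih =>
  have hmid : w₁.getVert h = w₂.getVert h := by simpa using hvert 1
  rcases le_or_gt N h with hNh | hhN
  · have hv : v₁ = v₂ := by
      rwa [getVert_of_length_le _ (by omega), getVert_of_length_le _ (by omega)] at hmid
    subst hv
    exact h₁.toFinset_edges_eq_of_length_add_le hG h₂ (by omega)
  have htake : (w₁.take h).edges.toFinset = (w₂.take h).edges.toFinset := by
    refine ih h hhN (h₁.take h) (h₂.take h) (by simp [hlen])
      (fun i => ?_) (by rw [take_length, hN, min_eq_left hhN.le])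
    rcases i with _ | i
    · simp
    · simpa [take_getVert, Nat.le_mul_of_pos_left h (Nat.succ_pos i)] using hmid
  have hdrop : (w₁.drop h).edges.toFinset = ((w₂.drop h).copy hmid.symm rfl).edges.toFinset := by
    refine ih (N - h) (by omega) (h₁.drop h) (by simpa using h₂.drop h) (by simp [hlen])
      (fun i => ?_) (by simp [hN])
    simpa [drop_getVert, add_mul, add_comm] using hvert (i + 1)
  rw [toFinset_edges_eq_union_take_drop w₁ h, toFinset_edges_eq_union_take_drop w₂ h, htake,
    hdrop, edges_copy]

end SimpleGraph.Walk

section Counting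

variable {V : Type*} [Fintype V] {G : SimpleGraph V} [DecidableRel G.Adj]

theorem card_filter_degree_pos_le : #{v | 0 < G.degree v} ≤ 2 * #G.edgeFinset := by
  calc #{v | 0 < G.degree v} = ∑ v ∈ {v | 0 < G.degree v}, 1 := (card_eq_sum_ones _)
    _ ≤ ∑ v ∈ {v | 0 < G.degree v}, G.degree v := sum_le_sum fun v hv => (mem_filter.mp hv).2
    _ ≤ ∑ v, G.degree v := sum_le_sum_of_subset (subset_univ _)
    _ = 2 * #G.edgeFinset := G.sum_degrees_eq_twice_card_edges

theorem SimpleGraph.Walk.IsCycle.degree_getVert_pos {u : V} {c : G.Walk u u} (hc : c.IsCycle)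
    (i : ℕ) : 0 < G.degree (c.getVert i) := by
  have h3 := hc.three_le_length
  rw [G.degree_pos_iff_exists_adj]
  rcases lt_or_ge i c.length with hi | hi
  · exact ⟨_, c.adj_getVert_succ hi⟩
  · rw [c.getVert_of_length_le hi, ← c.getVert_zero]
    exact ⟨_, c.adj_getVert_succ (by omega)⟩

variable [DecidableEq V]

theorem card_le_of_isCycleSet {ℓ h t : ℕ} (hG : (ℓ : ℕ∞) < G.egirth) (hh : 0 < h)
    (hhℓ : 2 * h ≤ ℓ) {𝒞 : Finset (Finset (Sym2 V))} (h𝒞 : ∀ D ∈ 𝒞, IsCycleSet G D ∧ #D = t) :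
    #𝒞 ≤ (2 * #G.edgeFinset) ^ (t / h + 1) := by
  set r := t / h + 1
  have hrt : t ≤ r * h := by
    have := Nat.lt_div_mul_add (a := t) hh
    rw [add_one_mul]; omega
  let R (D : Finset (Sym2 V)) (τ : Fin r → V) : Prop :=
    ∃ (u : V) (c : G.Walk u u), c.IsCycle ∧ D = c.edges.toFinset ∧ ∀ i, τ i = c.getVert (i * h)
  have hlen : ∀ D ∈ 𝒞, ∀ (u : V) (c : G.Walk u u), c.IsCycle → D = c.edges.toFinset →
      c.length = t := by
    rintro D hD u c hc rfl
    rw [← (h𝒞 _ hD).2, hc.isTrail.card_toFinset_edges]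
  calc #𝒞 ≤ #(Fintype.piFinset fun _ : Fin r => ({v | 0 < G.degree v} : Finset V)) := by
        refine card_le_card_of_forall_subsingleton R (fun D hD => ?_) (fun τ _ => ?_)
        · obtain ⟨u, c, hc, rfl⟩ := (h𝒞 D hD).1
          exact ⟨fun i => c.getVert (i * h), Fintype.mem_piFinset.mpr fun i =>
            mem_filter.mpr ⟨mem_univ _, hc.degree_getVert_pos _⟩, u, c, hc, rfl, fun i => rfl⟩
        · rintro D₁ ⟨hD₁, u₁, c₁, hc₁, rfl, hτ₁⟩ D₂ ⟨hD₂, u₂, c₂, hc₂, rfl, hτ₂⟩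
          have hu : u₁ = u₂ := by
            simpa using (hτ₁ ⟨0, Nat.succ_pos _⟩).symm.trans (hτ₂ ⟨0, Nat.succ_pos _⟩)
          subst hu
          have hl₁ := hlen _ hD₁ u₁ c₁ hc₁ rfl
          have hl₂ := hlen _ hD₂ u₁ c₂ hc₂ rfl
          refine hc₁.isTrail.toFinset_edges_eq_of_getVert_mul_eq hG hh hhℓ hc₂.isTrail
            (hl₁.trans hl₂.symm) fun i => ?_
          rcases lt_or_ge i r with hi | hi
          · exact (hτ₁ ⟨i, hi⟩).symm.trans (hτ₂ ⟨i, hi⟩)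
          · have hti : t ≤ i * h := hrt.trans (Nat.mul_le_mul_right h hi)
            rw [c₁.getVert_of_length_le (by omega), c₂.getVert_of_length_le (by omega)]
    _ = #({v | 0 < G.degree v} : Finset V) ^ r := by simp
    _ ≤ (2 * #G.edgeFinset) ^ r := Nat.pow_le_pow_left card_filter_degree_pos_le r

end Counting

section Bernoulli

variable {α : Type*} [DecidableEq α] {E : Finset α} {p : ℝ}

/-- Expand `p ^ #D = ∏_{e ∈ E} (p + g e)` with `g e = 0` on `D` and `1 - p` off `D`. -/
theorem bernoulliSubsetProb_setOf_subset {D : Finset α} (hD : D ⊆ E) :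
    bernoulliSubsetProb E p {S | D ⊆ S} = p ^ #D := by
  have hexp := prod_add (fun _ => p) (fun e => if e ∈ D then 0 else 1 - p) E
  have hlhs : ∏ e ∈ E, (p + if e ∈ D then 0 else 1 - p) = p ^ #D := by
    rw [prod_congr rfl fun e _ => show (p + if e ∈ D then 0 else 1 - p) = if e ∈ D then p else 1
      by split_ifs <;> ring, prod_ite_mem, inter_eq_right.mpr hD, prod_const]
  rw [hlhs] at hexp
  rw [hexp, bernoulliSubsetProb]
  refine sum_congr rfl fun S hS => ?_
  rw [mem_powerset] at hS
  by_cases hDS : D ⊆ S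
  · rw [Set.indicator_of_mem hDS, prod_const, ← card_sdiff_of_subset hS,
      prod_congr rfl fun e he => if_neg fun heD => (mem_sdiff.mp he).2 (hDS heD), prod_const]
  · obtain ⟨e, heD, heS⟩ := not_subset.mp hDS
    rw [Set.indicator_of_notMem hDS,
      prod_eq_zero (mem_sdiff.mpr ⟨hD heD, heS⟩) (by rw [if_pos heD]), mul_zero]

theorem bernoulliSubsetProb_le_add_sum (hp0 : 0 ≤ p) (hp1 : p ≤ 1) {A B : Set (Finset α)}
    {ι : Type*} (I : Finset ι) (F : ι → Set (Finset α)) (hB : B ⊆ A ∪ ⋃ i ∈ I, F i) :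
    bernoulliSubsetProb E p B ≤
      bernoulliSubsetProb E p A + ∑ i ∈ I, bernoulliSubsetProb E p (F i) := by
  simp only [bernoulliSubsetProb]
  rw [sum_comm, ← sum_add_distrib]
  refine sum_le_sum fun S _ => ?_
  set w := fun S : Finset α => p ^ #S * (1 - p) ^ (#E - #S)
  have hind : ∀ X : Set (Finset α), 0 ≤ X.indicator w S := fun X =>
    Set.indicator_nonneg (fun S _ => mul_nonneg (pow_nonneg hp0 _) (pow_nonneg (by linarith) _)) S
  by_cases hSB : S ∈ B
  · rw [Set.indicator_of_mem hSB]
    rcases hB hSB with hSA | hSF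
    · rw [Set.indicator_of_mem hSA]
      exact le_add_of_nonneg_right (sum_nonneg fun i _ => hind _)
    · obtain ⟨i, hi, hSi⟩ := Set.mem_iUnion₂.mp hSF
      calc w S = (F i).indicator w S := (Set.indicator_of_mem hSi _).symm
        _ ≤ ∑ i ∈ I, (F i).indicator w S := single_le_sum (fun i _ => hind _) hi
        _ ≤ _ := le_add_of_nonneg_left (hind _)
  · rw [Set.indicator_of_notMem hSB]
    exact add_nonneg (hind _) (sum_nonneg fun i _ => hind _)

end Bernoulli

theorem pow_card_sub_sum_le_bernoulliSubsetProb {α : Type*} [DecidableEq α] {E : Finset α}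
    {p : ℝ} (hp0 : 0 ≤ p) (hp1 : p ≤ 1) {P : Finset α → Prop} [DecidablePred P]
    (hPE : ∀ D, P D → D ⊆ E) {C : Finset α} (hC : C ⊆ E) :
    p ^ #C - ∑ D ∈ {D ∈ E.powerset | P D}.erase C, p ^ #(C ∪ D) ≤
      bernoulliSubsetProb E p {S | C ⊆ S ∧ ∀ D, P D → D ≠ C → ¬ D ⊆ S} := by
  have hunion := bernoulliSubsetProb_le_add_sum (E := E) hp0 hp1
    (A := {S | C ⊆ S ∧ ∀ D, P D → D ≠ C → ¬ D ⊆ S}) (B := {S | C ⊆ S})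
    ({D ∈ E.powerset | P D}.erase C) (fun D => {S | C ∪ D ⊆ S}) fun S hCS => by
      by_cases hS : ∀ D, P D → D ≠ C → ¬ D ⊆ S
      · exact Or.inl ⟨hCS, hS⟩
      · push Not at hS
        obtain ⟨D, hPD, hDC, hDS⟩ := hS
        exact Or.inr (Set.mem_iUnion₂.mpr ⟨D, mem_erase.mpr ⟨hDC, mem_filter.mpr
          ⟨mem_powerset.mpr (hPE D hPD), hPD⟩⟩, union_subset hCS hDS⟩)
  rw [bernoulliSubsetProb_setOf_subset hC, sum_congr rfl fun D hD =>
    bernoulliSubsetProb_setOf_subset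
      (union_subset hC (hPE D (mem_filter.mp (mem_of_mem_erase hD)).2))] at hunion
  linarith

section Numerics

variable {m p : ℝ} {ℓ : ℕ}

theorem pow_mul_pow_le_one_div_pow (hm : 1 ≤ m) (hℓ : ℓ ≠ 0)
    (hpℓ : p ^ ℓ = 1 / m ^ 100) {a b j : ℕ} (h : (a + b) * ℓ ≤ 100 * j) :
    m ^ a * p ^ j ≤ 1 / m ^ b := by
  have hm0 : 0 < m := by linarith
  refine le_of_pow_le_pow_left₀ hℓ (by positivity) ?_
  rw [mul_pow, ← pow_mul m, ← pow_mul p, mul_comm j ℓ, pow_mul p, hpℓ, div_pow, div_pow, one_pow,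
    one_pow, ← pow_mul, ← pow_mul, mul_one_div, div_le_div_iff₀ (by positivity) (by positivity),
    one_mul, ← pow_add, ← add_mul]
  exact pow_le_pow_right₀ hm (by linarith)

theorem one_div_pow_le_pow (hm : 1 ≤ m) (hp0 : 0 ≤ p) (hℓ : ℓ ≠ 0)
    (hpℓ : p ^ ℓ = 1 / m ^ 100) {b k : ℕ} (h : 100 * k ≤ b * ℓ) : 1 / m ^ b ≤ p ^ k := by
  have hm0 : 0 < m := by linarith
  refine le_of_pow_le_pow_left₀ hℓ (by positivity) ?_
  rw [← pow_mul, mul_comm k ℓ, pow_mul, hpℓ, div_pow, div_pow, one_pow, one_pow, ← pow_mul,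
    ← pow_mul, div_le_div_iff₀ (by positivity) (by positivity), one_mul, one_mul]
  exact pow_le_pow_right₀ hm (by linarith)

theorem two_mul_pow_mul_pow_le (hm : 2 ≤ m) (hp0 : 0 ≤ p) (hℓ : 100 ≤ ℓ)
    (hpℓ : p ^ ℓ = 1 / m ^ 100) {t : ℕ} (ht : ℓ < t) :
    (2 * m) ^ (t / (ℓ / 2) + 1) * p ^ (99 * t / 200 + 1) ≤ 1 / m ^ 41 := by
  have hexp : (2 * (t / (ℓ / 2) + 1) + 41) * ℓ ≤ 100 * (99 * t / 200 + 1) := by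
    have hqh : t / (ℓ / 2) * (ℓ / 2) ≤ t := Nat.div_mul_le_self t _
    have hqℓ : t / (ℓ / 2) * ℓ ≤ t / (ℓ / 2) * (2 * (ℓ / 2) + 1) :=
      Nat.mul_le_mul_left _ (by omega)
    have hq50 : t / (ℓ / 2) * 50 ≤ t / (ℓ / 2) * (ℓ / 2) := Nat.mul_le_mul_left _ (by omega)
    rw [mul_add, mul_one] at hqℓ
    generalize t / (ℓ / 2) = q at *
    ring_nf at *
    omega
  calc (2 * m) ^ (t / (ℓ / 2) + 1) * p ^ (99 * t / 200 + 1)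
      ≤ m ^ (2 * (t / (ℓ / 2) + 1)) * p ^ (99 * t / 200 + 1) := by
        rw [pow_mul]
        gcongr
        nlinarith
    _ ≤ 1 / m ^ 41 := pow_mul_pow_le_one_div_pow (by linarith) (by omega) hpℓ hexp

end Numerics

section Cycles

variable {V : Type*} [DecidableEq V] {G : SimpleGraph V} {ℓ : ℕ}

theorem pow_card_union_le (hG : (ℓ : ℕ∞) < G.egirth) {p : ℝ} (hp0 : 0 ≤ p) (hp1 : p ≤ 1)
    {C C' : Finset (Sym2 V)} (hC : IsCycleSet G C) (hC' : IsCycleSet G C') (hne : C' ≠ C)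
    (hk : 100 * #C ≤ 101 * ℓ) : p ^ #(C ∪ C') ≤ p ^ #C * p ^ (99 * #C' / 200 + 1) := by
  have hΔ : ℓ < #(C ∆ C') := lt_card_of_isEvenEdgeSet hG
    ((coe_subset.mpr symmDiff_subset_union).trans (by
      simpa using Set.union_subset hC.coe_subset_edgeSet hC'.coe_subset_edgeSet))
    (symmDiff_nonempty.mpr hne.symm) (hC.isEvenEdgeSet.symmDiff hC'.isEvenEdgeSet)
  have hC'ℓ : ℓ < #C' := lt_egirth_iff_forall_isCycleSet.mp hG C' hC'
  have hsdiff : 99 * #C' / 200 + 1 ≤ #(C' \ C) := by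
    have h₁ := card_sdiff_add_card_inter C C'
    have h₂ := card_sdiff_add_card_inter C' C
    rw [Finset.symmDiff_def, card_union_of_disjoint disjoint_sdiff_sdiff] at hΔ
    rw [inter_comm] at h₂
    omega
  calc p ^ #(C ∪ C') = p ^ #C * p ^ #(C' \ C) := by
        rw [union_comm, ← card_sdiff_add_card, pow_add, mul_comm]
    _ ≤ p ^ #C * p ^ (99 * #C' / 200 + 1) :=
        mul_le_mul_of_nonneg_left (pow_le_pow_of_le_one hp0 hp1 hsdiff) (pow_nonneg hp0 _)

end Cycles

theorem sum_pow_le_of_isCycleSet {V : Type*} [Fintype V] [DecidableEq V] {G : SimpleGraph V}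
    [DecidableRel G.Adj] {m ℓ : ℕ} (hm : 2 ≤ m) (hedges : #G.edgeFinset = m)
    (hG : (ℓ : ℕ∞) < G.egirth) (hℓ : 100 ≤ ℓ) {p : ℝ} (hp0 : 0 ≤ p)
    (hpℓ : p ^ ℓ = 1 / (m : ℝ) ^ 100) {𝒟 : Finset (Finset (Sym2 V))}
    (h𝒟 : ∀ D ∈ 𝒟, IsCycleSet G D) :
    ∑ D ∈ 𝒟, p ^ (99 * #D / 200 + 1) ≤ 1 / (m : ℝ) ^ 40 := by
  have hlen : ∀ D ∈ 𝒟, #D ∈ Ioc ℓ m := fun D hD => mem_Ioc.mpr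
    ⟨lt_egirth_iff_forall_isCycleSet.mp hG D (h𝒟 D hD),
      hedges ▸ card_le_card (h𝒟 D hD).subset_edgeFinset⟩
  rw [← sum_fiberwise_of_maps_to hlen]
  calc ∑ t ∈ Ioc ℓ m, ∑ D ∈ 𝒟 with #D = t, p ^ (99 * #D / 200 + 1)
      = ∑ t ∈ Ioc ℓ m, (#{D ∈ 𝒟 | #D = t} : ℝ) * p ^ (99 * t / 200 + 1) := by
        refine sum_congr rfl fun t _ => ?_
        rw [sum_congr rfl fun D hD => by rw [(mem_filter.mp hD).2], sum_const, nsmul_eq_mul]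
    _ ≤ ∑ t ∈ Ioc ℓ m, 1 / (m : ℝ) ^ 41 := by
        refine sum_le_sum fun t ht => ?_
        have hcount := card_le_of_isCycleSet (t := t) (𝒞 := {D ∈ 𝒟 | #D = t}) hG (h := ℓ / 2)
          (by omega) (by omega) fun D hD => ⟨h𝒟 D (mem_filter.mp hD).1, (mem_filter.mp hD).2⟩
        rw [hedges] at hcount
        calc (#{D ∈ 𝒟 | #D = t} : ℝ) * p ^ (99 * t / 200 + 1)
            ≤ (2 * m) ^ (t / (ℓ / 2) + 1) * p ^ (99 * t / 200 + 1) := by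
              gcongr
              exact_mod_cast hcount
          _ ≤ 1 / (m : ℝ) ^ 41 :=
              two_mul_pow_mul_pow_le (by exact_mod_cast hm) hp0 hℓ hpℓ (mem_Ioc.mp ht).1
    _ ≤ m * (1 / (m : ℝ) ^ 41) := by
        rw [sum_const, Nat.card_Ioc, nsmul_eq_mul]
        gcongr
        exact_mod_cast Nat.sub_le m ℓ
    _ = 1 / (m : ℝ) ^ 40 := by field_simp

theorem sum_pow_card_union_le {V : Type*} [Fintype V] [DecidableEq V] {G : SimpleGraph V}
    [DecidableRel G.Adj] {m ℓ : ℕ} (hm : 2 ≤ m) (hedges : #G.edgeFinset = m)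
    (hG : (ℓ : ℕ∞) < G.egirth) (hℓ : 100 ≤ ℓ) {p : ℝ} (hp0 : 0 ≤ p) (hp1 : p ≤ 1)
    (hpℓ : p ^ ℓ = 1 / (m : ℝ) ^ 100) {C : Finset (Sym2 V)} (hC : IsCycleSet G C)
    (hk : 100 * #C ≤ 101 * ℓ) {𝒟 : Finset (Finset (Sym2 V))}
    (h𝒟 : ∀ D ∈ 𝒟, IsCycleSet G D ∧ D ≠ C) :
    ∑ D ∈ 𝒟, p ^ #(C ∪ D) ≤ p ^ #C * (1 / (m : ℝ) ^ 40) := by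
  calc ∑ D ∈ 𝒟, p ^ #(C ∪ D) ≤ ∑ D ∈ 𝒟, p ^ #C * p ^ (99 * #D / 200 + 1) :=
        sum_le_sum fun D hD => pow_card_union_le hG hp0 hp1 hC (h𝒟 D hD).1 (h𝒟 D hD).2 hk
    _ ≤ p ^ #C * (1 / (m : ℝ) ^ 40) := by
        rw [← mul_sum]
        exact mul_le_mul_of_nonneg_left (sum_pow_le_of_isCycleSet hm hedges hG hℓ hp0 hpℓ
          fun D hD => (h𝒟 D hD).1) (pow_nonneg hp0 _)

theorem unique_cycle_survival_prob_general {V : Type*} [Fintype V] [DecidableEq V]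
    (G : SimpleGraph V) [DecidableRel G.Adj] (m ℓ : ℕ) (hm : 2 ≤ m)
    (hedges : G.edgeFinset.card = m)
    (hgirth : ∀ C : Finset (Sym2 V), IsCycleSet G C → ℓ < C.card)
    (p : ℝ) (hp0 : 0 ≤ p) (hp1 : p ≤ 1) (hpl : p ^ ℓ = 1 / (m : ℝ) ^ 100)
    (C : Finset (Sym2 V)) (hC : IsCycleSet G C)
    (hk2 : (C.card : ℝ) ≤ 1.01 * ℓ) :
    1 / (2 * (m : ℝ) ^ 101) ≤
      bernoulliSubsetProb G.edgeFinset p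
        {E' | C ⊆ E' ∧ ∀ C' : Finset (Sym2 V), IsCycleSet G C' → C' ≠ C → ¬ C' ⊆ E'} := by
  classical
  have hG : (ℓ : ℕ∞) < G.egirth := lt_egirth_iff_forall_isCycleSet.mpr hgirth
  have hk : 100 * #C ≤ 101 * ℓ := by
    have : (100 * #C : ℝ) ≤ 101 * ℓ := by linarith
    exact_mod_cast this
  have hℓ : 100 ≤ ℓ := by have := hgirth C hC; omega
  have hm1 : (1 : ℝ) ≤ m := by exact_mod_cast (by omega : 1 ≤ m)
  have hunion := pow_card_sub_sum_le_bernoulliSubsetProb hp0 hp1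
    (fun D hD => IsCycleSet.subset_edgeFinset hD) hC.subset_edgeFinset (p := p)
  have hsum := sum_pow_card_union_le hm hedges hG hℓ hp0 hp1 hpl hC hk
    (𝒟 := {D ∈ G.edgeFinset.powerset | IsCycleSet G D}.erase C) fun D hD =>
      ⟨(mem_filter.mp (mem_of_mem_erase hD)).2, ne_of_mem_erase hD⟩
  have hpk : 1 / (m : ℝ) ^ 101 ≤ p ^ #C := one_div_pow_le_pow hm1 hp0 (by omega) hpl (by omega)
  have hm40 : 1 / (m : ℝ) ^ 40 ≤ 1 / 2 := by
    gcongr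
    calc (2 : ℝ) ≤ m := by exact_mod_cast hm
      _ ≤ m ^ 40 := le_self_pow₀ hm1 (by norm_num)
  calc 1 / (2 * (m : ℝ) ^ 101) = 1 / (m : ℝ) ^ 101 * (1 - 1 / 2) := by ring
    _ ≤ p ^ #C * (1 - 1 / (m : ℝ) ^ 40) := by gcongr
    _ ≤ _ := by linarith

/-- If `G` has exactly `m ≥ 2` edges and no cycle of length `≤ ℓ`, `p^ℓ = 1/m^100`, and `C` is a
cycle of length `k` with `ℓ < k ≤ 1.01·ℓ`, then under Bernoulli(p) sampling of the edges, `C`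
is the unique surviving cycle with probability at least `1/(2·m^101)`. -/
theorem unique_cycle_survival_prob {V : Type*} [Fintype V] [DecidableEq V]
    (G : SimpleGraph V) [DecidableRel G.Adj] (m ℓ : ℕ) (hm : 2 ≤ m)
    (hedges : G.edgeFinset.card = m)
    (hgirth : ∀ C : Finset (Sym2 V), IsCycleSet G C → ℓ < C.card)
    (p : ℝ) (hp0 : 0 ≤ p) (hp1 : p ≤ 1) (hpl : p ^ ℓ = 1 / (m : ℝ) ^ 100)
    (C : Finset (Sym2 V)) (hC : IsCycleSet G C)
    (hk1 : ℓ < C.card) (hk2 : (C.card : ℝ) ≤ 1.01 * ℓ) :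
    1 / (2 * (m : ℝ) ^ 101) ≤
      bernoulliSubsetProb G.edgeFinset p
        {E' | C ⊆ E' ∧ ∀ C' : Finset (Sym2 V), IsCycleSet G C' → C' ≠ C → ¬ C' ⊆ E'} :=
  unique_cycle_survival_prob_general G m ℓ hm hedges hgirth p hp0 hp1 hpl C hC hk2
end

section
/- Let M be a binary matroid on a ground set E of exactly m elements, with m ≥ 2, containing no circuit of length ≤ ℓ. Suppose there is a real constant c ≥ 1 such that for every positive integer α the number of circuits of M of length at most α·ℓ is at most m^{c·α}. Let κ ≥ c, let p ∈ [0,1] satisfy p^ℓ = 1/m^{100κ}, and let C be a circuit of M of length k with ℓ < k ≤ 1.01·ℓ. Form a random subset E' ⊆ E by keeping each element independently with probability p. Then the probability that C is the unique circuit of M contained in E' is at least 1/(2·m^{101κ}). -/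
/-- A matroid is binary (`𝔽₂`-representable) if there is an assignment of a vector over `𝔽₂`
to each element of the ground set such that a subset of the ground set is independent iff the
corresponding vectors are linearly independent over `𝔽₂`. -/
def Matroid.IsBinary {α : Type*} (M : Matroid α) : Prop :=
  ∃ (ι : Type) (v : α → ι → ZMod 2),
    ∀ S : Set α, S ⊆ M.E →
      (M.Indep S ↔ LinearIndependent (ZMod 2) (fun x : S => v x.1))

section Aux
open scoped symmDiff

variable {α : Type} [Fintype α] [DecidableEq α]

lemma bsp_weight_nonneg (p : ℝ) (hp0 : 0 ≤ p) (hp1 : p ≤ 1) (n : ℕ) (S : Finset α) :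
    0 ≤ p ^ S.card * (1 - p) ^ (n - S.card) :=
  mul_nonneg (pow_nonneg hp0 _) (pow_nonneg (by linarith) _)

lemma bsp_nonneg (p : ℝ) (hp0 : 0 ≤ p) (hp1 : p ≤ 1) (A : Set (Finset α)) :
    0 ≤ bernoulliSubsetProb (Finset.univ : Finset α) p A := by
  refine Finset.sum_nonneg fun S _ => ?_
  exact Set.indicator_nonneg (fun S _ => bsp_weight_nonneg p hp0 hp1 _ S) S

lemma bsp_mono (p : ℝ) (hp0 : 0 ≤ p) (hp1 : p ≤ 1) {A B : Set (Finset α)} (h : A ⊆ B) :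
    bernoulliSubsetProb (Finset.univ : Finset α) p A ≤
      bernoulliSubsetProb (Finset.univ : Finset α) p B := by
  refine Finset.sum_le_sum fun S _ => ?_
  exact Set.indicator_le_indicator_of_subset h (fun S => bsp_weight_nonneg p hp0 hp1 _ S) S

lemma bsp_union_le (p : ℝ) (hp0 : 0 ≤ p) (hp1 : p ≤ 1) (A B : Set (Finset α)) :
    bernoulliSubsetProb (Finset.univ : Finset α) p (A ∪ B) ≤
      bernoulliSubsetProb (Finset.univ : Finset α) p A +
        bernoulliSubsetProb (Finset.univ : Finset α) p B := by
  classical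
  unfold bernoulliSubsetProb
  rw [← Finset.sum_add_distrib]
  refine Finset.sum_le_sum fun S _ => ?_
  set w : Finset α → ℝ := fun S => p ^ S.card * (1 - p) ^ ((Finset.univ : Finset α).card - S.card)
    with hw
  have hwn : 0 ≤ w S := bsp_weight_nonneg p hp0 hp1 _ S
  by_cases hA : S ∈ A
  · rw [Set.indicator_of_mem (Set.mem_union_left _ hA), Set.indicator_of_mem hA]
    have : 0 ≤ Set.indicator B w S := Set.indicator_nonneg (fun x _ => bsp_weight_nonneg p hp0 hp1 _ x) S
    linarith
  · by_cases hB : S ∈ B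
    · rw [Set.indicator_of_mem (Set.mem_union_right _ hB), Set.indicator_of_mem hB]
      have : 0 ≤ Set.indicator A w S := Set.indicator_nonneg (fun x _ => bsp_weight_nonneg p hp0 hp1 _ x) S
      linarith
    · rw [Set.indicator_of_notMem (fun h => h.elim hA hB), Set.indicator_of_notMem hA,
        Set.indicator_of_notMem hB]
      simp

lemma bsp_le_add_biUnion (p : ℝ) (hp0 : 0 ≤ p) (hp1 : p ≤ 1) (A : Set (Finset α))
    {β : Type} [DecidableEq β] (s : Finset β) (B : β → Set (Finset α)) :
    bernoulliSubsetProb (Finset.univ : Finset α) p (A ∪ ⋃ b ∈ s, B b) ≤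
      bernoulliSubsetProb (Finset.univ : Finset α) p A +
        ∑ b ∈ s, bernoulliSubsetProb (Finset.univ : Finset α) p (B b) := by
  classical
  induction s using Finset.induction with
  | empty => simp
  | @insert a s ha ih =>
      have h1 : (A ∪ ⋃ b ∈ insert a s, B b) = (A ∪ ⋃ b ∈ s, B b) ∪ B a := by
        rw [Finset.set_biUnion_insert]; ext x; simp only [Set.mem_union]; tauto
      rw [h1, Finset.sum_insert ha]
      calc bernoulliSubsetProb (Finset.univ : Finset α) p ((A ∪ ⋃ b ∈ s, B b) ∪ B a)
          ≤ bernoulliSubsetProb (Finset.univ : Finset α) p (A ∪ ⋃ b ∈ s, B b) +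
            bernoulliSubsetProb (Finset.univ : Finset α) p (B a) :=
            bsp_union_le p hp0 hp1 _ _
        _ ≤ _ := by linarith

lemma bsp_sum_powerset_weight (p : ℝ) (s : Finset α) :
    ∑ U ∈ s.powerset, p ^ U.card * (1 - p) ^ (s.card - U.card) = 1 := by
  have h := Finset.prod_add (fun _ : α => p) (fun _ : α => 1 - p) s
  simp only [Finset.prod_const] at h
  rw [show p + (1 - p) = 1 by ring, one_pow] at h
  refine Eq.trans ?_ h.symm
  refine Finset.sum_congr rfl fun t ht => ?_
  rw [Finset.card_sdiff_of_subset (Finset.mem_powerset.mp ht)]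

lemma bsp_cube (p : ℝ) (T : Finset α) :
    bernoulliSubsetProb (Finset.univ : Finset α) p {S : Finset α | T ⊆ S} = p ^ T.card := by
  classical
  have hTcard : T.card ≤ Fintype.card α := by
    simpa using Finset.card_le_card (Finset.subset_univ T)
  unfold bernoulliSubsetProb
  calc ∑ S ∈ (Finset.univ : Finset α).powerset,
        Set.indicator {S : Finset α | T ⊆ S}
          (fun S => p ^ S.card * (1 - p) ^ ((Finset.univ : Finset α).card - S.card)) S
      = ∑ S ∈ (Finset.univ : Finset α).powerset.filter (fun S => T ⊆ S),
          p ^ S.card * (1 - p) ^ (Fintype.card α - S.card) := by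
        rw [Finset.sum_filter]
        refine Finset.sum_congr rfl fun S _ => ?_
        rw [Set.indicator_apply]
        simp only [Set.mem_setOf_eq, Finset.card_univ]
    _ = ∑ U ∈ ((Finset.univ : Finset α) \ T).powerset,
          p ^ (U.card + T.card) * (1 - p) ^ (Fintype.card α - (U.card + T.card)) := by
        refine Finset.sum_nbij' (fun S => S \ T) (fun U => U ∪ T) ?_ ?_ ?_ ?_ ?_
        · intro S hS
          simp only [Finset.mem_filter, Finset.mem_powerset] at hS ⊢
          exact Finset.sdiff_subset_sdiff hS.1 le_rfl
        · intro U hU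
          simp only [Finset.mem_filter, Finset.mem_powerset] at hU ⊢
          exact ⟨Finset.subset_univ _, Finset.subset_union_right⟩
        · intro S hS
          simp only [Finset.mem_filter] at hS
          exact Finset.sdiff_union_of_subset hS.2
        · intro U hU
          simp only [Finset.mem_powerset] at hU
          have : Disjoint U T := by
            refine Finset.disjoint_left.mpr fun x hx => ?_
            have := hU hx
            simp only [Finset.mem_sdiff] at this
            exact this.2
          show (U ∪ T) \ T = U
          rw [Finset.union_sdiff_right, Finset.sdiff_eq_self_of_disjoint this]
        · intro S hS
          simp only [Finset.mem_filter] at hS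
          rw [Finset.card_sdiff_add_card_eq_card hS.2]
    _ = p ^ T.card * ∑ U ∈ ((Finset.univ : Finset α) \ T).powerset,
          p ^ U.card * (1 - p) ^ (((Finset.univ : Finset α) \ T).card - U.card) := by
        rw [Finset.mul_sum]
        refine Finset.sum_congr rfl fun U hU => ?_
        have hU' := Finset.mem_powerset.mp hU
        have h1 : ((Finset.univ : Finset α) \ T).card = Fintype.card α - T.card := by
          rw [Finset.card_sdiff_of_subset (Finset.subset_univ T), Finset.card_univ]
        have h2 : U.card ≤ Fintype.card α - T.card := by
          rw [← h1]; exact Finset.card_le_card hU'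
        rw [h1, show Fintype.card α - (U.card + T.card) = (Fintype.card α - T.card) - U.card
          from by omega, pow_add]
        ring
    _ = p ^ T.card := by rw [bsp_sum_powerset_weight, mul_one]

lemma exists_circuitOf_subset (M : Matroid α) :
    ∀ (S : Set α), S ⊆ M.E → ¬ M.Indep S → ∃ D, D ⊆ S ∧ IsCircuitOf M D := by
  classical
  suffices h : ∀ (n : ℕ) (S : Set α), S.ncard = n → S ⊆ M.E → ¬ M.Indep S →
      ∃ D, D ⊆ S ∧ IsCircuitOf M D by
    intro S hSE hS; exact h S.ncard S rfl hSE hS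
  intro n
  induction n using Nat.strong_induction_on with
  | _ n ih =>
    intro S hn hSE hS
    by_cases h : ∀ D : Set α, D ⊂ S → M.Indep D
    · exact ⟨S, subset_rfl, hSE, hS, h⟩
    · push_neg at h
      obtain ⟨D, hDS, hD⟩ := h
      obtain ⟨D', hD'1, hD'2⟩ := ih D.ncard
        (by rw [← hn]; exact Set.ncard_lt_ncard hDS (Set.toFinite S)) D rfl
        (hDS.subset.trans hSE) hD
      exact ⟨D', hD'1.trans hDS.subset, hD'2⟩

variable {M : Matroid α} {ι : Type} {v : α → ι → ZMod 2}

/-- A nonempty set of vectors summing to zero is dependent. -/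
lemma dep_of_sum_zero
    (hv : ∀ S : Set α, S ⊆ M.E → (M.Indep S ↔ LinearIndependent (ZMod 2) (fun x : S => v x.1)))
    (hground : M.E = Set.univ)
    (s : Finset α) (hne : s.Nonempty) (hsum : ∑ x ∈ s, v x = 0) :
    ¬ M.Indep (↑s : Set α) := by
  classical
  intro hI
  have hli := (hv _ (by rw [hground]; exact Set.subset_univ _)).mp hI
  rw [Fintype.linearIndependent_iff] at hli
  have h1 : ∑ x : (↑s : Set α), (fun _ => (1 : ZMod 2)) x • v x.1 = 0 := by
    simp only [one_smul]
    rw [Finset.sum_set_coe (f := fun x => v x)]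
    rw [Finset.toFinset_coe]
    exact hsum
  obtain ⟨x, hx⟩ := hne
  exact one_ne_zero (hli (fun _ => (1 : ZMod 2)) h1 ⟨x, hx⟩)

/-- The vectors of a circuit of a binary matroid sum to zero. -/
lemma circuit_sum_zero
    (hv : ∀ S : Set α, S ⊆ M.E → (M.Indep S ↔ LinearIndependent (ZMod 2) (fun x : S => v x.1)))
    (hground : M.E = Set.univ)
    {D : Set α} (hD : IsCircuitOf M D) (s : Finset α) (hs : (↑s : Set α) = D) :
    ∑ x ∈ s, v x = 0 := by
  classical
  subst hs
  obtain ⟨hDE, hDdep, hDmin⟩ := hD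
  have hnli : ¬ LinearIndependent (ZMod 2) (fun x : (↑s : Set α) => v x.1) :=
    fun h => hDdep ((hv _ hDE).mpr h)
  rw [Fintype.not_linearIndependent_iff] at hnli
  obtain ⟨g, hg0, x₀, hx₀⟩ := hnli
  set g' : α → ZMod 2 := fun x => if h : x ∈ (↑s : Set α) then g ⟨x, h⟩ else 0 with hg'
  have hgg' : ∀ x : (↑s : Set α), g x = g' x.1 := fun x => by simp [hg', x.2]
  set s₀ : Finset α := s.filter (fun x => g' x ≠ 0) with hs₀
  have hsum₀ : ∑ x ∈ s₀, v x = 0 := by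
    have e1 : ∑ x ∈ s₀, v x = ∑ x ∈ s, g' x • v x := by
      rw [Finset.sum_filter]
      refine Finset.sum_congr rfl fun x _ => ?_
      by_cases h : g' x ≠ 0
      · rw [if_pos h]
        have : g' x = 1 := by revert h; generalize g' x = a; revert a; decide
        rw [this, one_smul]
      · rw [if_neg h]
        push_neg at h
        rw [h, zero_smul]
    have e2 : ∑ x ∈ s, g' x • v x = ∑ x : (↑s : Set α), g x • v x.1 := by
      rw [← Finset.sum_finset_coe (f := fun x => g' x • v x)]
      exact Finset.sum_congr rfl fun x _ => by rw [hgg']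
    rw [e1, e2.trans hg0]
  have hs₀D : (↑s₀ : Set α) ⊆ (↑s : Set α) := by
    intro x hx
    have := (Finset.mem_filter.mp hx).1
    exact this
  have hne : s₀.Nonempty := ⟨x₀.1, Finset.mem_filter.mpr ⟨x₀.2,
    by rw [← hgg' x₀]; exact hx₀⟩⟩
  have heq : (↑s₀ : Set α) = (↑s : Set α) := by
    by_contra hne'
    exact dep_of_sum_zero hv hground s₀ hne hsum₀
      (hDmin _ (HasSubset.Subset.ssubset_of_ne hs₀D hne'))
  rw [← Finset.coe_injective heq]
  exact hsum₀

lemma sum_symmDiff_char2 (s t : Finset α) (f : α → ι → ZMod 2) :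
    ∑ x ∈ s ∆ t, f x = ∑ x ∈ s, f x + ∑ x ∈ t, f x := by
  classical
  have h1 : ∑ x ∈ s ∪ t, f x = ∑ x ∈ s ∆ t, f x + ∑ x ∈ s ∩ t, f x := by
    have hu : s ∆ t ∪ (s ∩ t) = s ∪ t := by
      ext x; simp only [Finset.mem_union, Finset.mem_symmDiff, Finset.mem_inter]; tauto
    have hd : Disjoint (s ∆ t) (s ∩ t) := by
      rw [Finset.disjoint_left]
      intro x hx hx2
      simp only [Finset.mem_symmDiff, Finset.mem_inter] at hx hx2
      tauto
    rw [← hu]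
    exact Finset.sum_union hd
  have h2 : ∑ x ∈ s ∪ t, f x + ∑ x ∈ s ∩ t, f x = ∑ x ∈ s, f x + ∑ x ∈ t, f x :=
    Finset.sum_union_inter
  have h3 : ∑ x ∈ s ∩ t, f x + ∑ x ∈ s ∩ t, f x = 0 := by
    funext i
    exact CharTwo.add_self_eq_zero _
  calc ∑ x ∈ s ∆ t, f x
      = ∑ x ∈ s ∆ t, f x + (∑ x ∈ s ∩ t, f x + ∑ x ∈ s ∩ t, f x) := by rw [h3, add_zero]
    _ = (∑ x ∈ s ∆ t, f x + ∑ x ∈ s ∩ t, f x) + ∑ x ∈ s ∩ t, f x := by ring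
    _ = ∑ x ∈ s, f x + ∑ x ∈ t, f x := by rw [← h1, h2]

lemma circuit_symmDiff_contains_circuit
    (hv : ∀ S : Set α, S ⊆ M.E → (M.Indep S ↔ LinearIndependent (ZMod 2) (fun x : S => v x.1)))
    (hground : M.E = Set.univ)
    {C C' : Set α} (hC : IsCircuitOf M C) (hC' : IsCircuitOf M C') (hne : C ≠ C')
    (sC sC' : Finset α) (hsC : (↑sC : Set α) = C) (hsC' : (↑sC' : Set α) = C') :
    ∃ D : Set α, IsCircuitOf M D ∧ D ⊆ ↑(sC ∆ sC') := by
  classical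
  have hsum : ∑ x ∈ sC ∆ sC', v x = 0 := by
    rw [sum_symmDiff_char2, circuit_sum_zero hv hground hC sC hsC,
      circuit_sum_zero hv hground hC' sC' hsC', add_zero]
  have hne' : sC ∆ sC' ≠ ∅ := by
    intro h
    apply hne
    have h2 : sC = sC' := symmDiff_eq_bot.mp (by rw [Finset.bot_eq_empty]; exact h)
    rw [← hsC, ← hsC', h2]
  have hdep := dep_of_sum_zero hv hground (sC ∆ sC')
    (Finset.nonempty_iff_ne_empty.mpr hne') hsum
  obtain ⟨D, hD1, hD2⟩ := exists_circuitOf_subset M _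
    (by rw [hground]; exact Set.subset_univ _) hdep
  exact ⟨D, hD2, hD1⟩

end Aux

set_option maxHeartbeats 1000000 in
open scoped symmDiff in
/-- Let `M` be a binary matroid on exactly `m ≥ 2` elements with no circuit of length `≤ ℓ`,
satisfying a smooth circuit counting bound with constant `c ≥ 1` (at most `m^(c·α)` circuits of
length `≤ α·ℓ`). For `κ ≥ c` and `p` with `p^ℓ = 1/m^(100κ)`, any circuit `C` of length `k`
with `ℓ < k ≤ 1.01·ℓ` is the unique circuit contained in a Bernoulli(p) sample of the ground
set with probability at least `1/(2·m^(101κ))`. -/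
theorem unique_circuit_survival_prob {α : Type} [Fintype α] [DecidableEq α]
    (M : Matroid α) (hbin : M.IsBinary) (hground : M.E = Set.univ)
    (m ℓ : ℕ) (hm : 2 ≤ m) (hcard : Fintype.card α = m) (hℓ : 0 < ℓ)
    (hgirth : ∀ C : Set α, IsCircuitOf M C → ℓ < C.ncard)
    (c κ : ℝ) (hc : 1 ≤ c) (hκ : c ≤ κ)
    (hcount : ∀ a : ℕ, 0 < a →
      (({C : Set α | IsCircuitOf M C ∧ C.ncard ≤ a * ℓ}).ncard : ℝ) ≤ (m : ℝ) ^ (c * a))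
    (p : ℝ) (hp0 : 0 ≤ p) (hp1 : p ≤ 1)
    (hpl : p ^ ℓ = 1 / (m : ℝ) ^ (100 * κ))
    (C : Set α) (hC : IsCircuitOf M C)
    (hk1 : ℓ < C.ncard) (hk2 : (C.ncard : ℝ) ≤ 1.01 * ℓ) :
    1 / (2 * (m : ℝ) ^ (101 * κ)) ≤
      bernoulliSubsetProb (Finset.univ : Finset α) p
        {E' | C ⊆ ↑E' ∧ ∀ C' : Set α, IsCircuitOf M C' → C' ≠ C → ¬ C' ⊆ ↑E'} := by
  classical
  obtain ⟨ι, v, hv⟩ := hbin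
  -- numeric basics
  have hm2 : (2:ℝ) ≤ (m:ℝ) := by exact_mod_cast hm
  have hm1 : (1:ℝ) ≤ (m:ℝ) := by linarith
  have hm0 : (0:ℝ) < (m:ℝ) := by linarith
  have hκ1 : (1:ℝ) ≤ κ := le_trans hc hκ
  have hppos : (0:ℝ) < p := by
    rcases eq_or_lt_of_le hp0 with h | h
    · exfalso
      have hpos : (0:ℝ) < 1 / (m:ℝ) ^ (100*κ) := by positivity
      rw [← hpl, ← h, zero_pow hℓ.ne'] at hpos
      exact lt_irrefl _ hpos
    · exact h
  have hpl' : p ^ ((ℓ:ℕ):ℝ) = (m:ℝ) ^ (-(100*κ)) := by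
    rw [Real.rpow_natCast, hpl, Real.rpow_neg hm0.le, one_div]
  set k := C.ncard with hk
  have hkcard : C.toFinset.card = k := (Set.ncard_eq_toFinset_card' C).symm
  set A : Set (Finset α) :=
    {E' | C ⊆ ↑E' ∧ ∀ C' : Set α, IsCircuitOf M C' → C' ≠ C → ¬ C' ⊆ ↑E'} with hA
  set B : Set (Finset α) := {E' : Finset α | C ⊆ ↑E'} with hBdef
  have hB : bernoulliSubsetProb (Finset.univ : Finset α) p B = p ^ k := by
    have he : B = {S : Finset α | C.toFinset ⊆ S} := by
      ext S; simp [hBdef, Set.toFinset_subset]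
    rw [he, bsp_cube p C.toFinset, hkcard]
  set circs : Finset (Set α) :=
    Finset.univ.filter (fun C' : Set α => IsCircuitOf M C' ∧ C' ≠ C) with hcircs
  set Bad : Set α → Set (Finset α) :=
    fun C' => {S : Finset α | C.toFinset ∪ C'.toFinset ⊆ S} with hBadDef
  have hcover : B ⊆ A ∪ ⋃ C' ∈ circs, Bad C' := by
    intro S hS
    simp only [hBdef, Set.mem_setOf_eq] at hS
    by_cases hA' : ∀ C' : Set α, IsCircuitOf M C' → C' ≠ C → ¬ C' ⊆ ↑S
    · exact Or.inl ⟨hS, hA'⟩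
    · push_neg at hA'
      obtain ⟨C', h1, h2, h3⟩ := hA'
      refine Or.inr (Set.mem_iUnion₂.mpr ⟨C', ?_, ?_⟩)
      · exact Finset.mem_filter.mpr ⟨Finset.mem_univ _, h1, h2⟩
      · simp only [hBadDef, Set.mem_setOf_eq, Finset.union_subset_iff, Set.toFinset_subset]
        exact ⟨hS, h3⟩
  have hub : bernoulliSubsetProb (Finset.univ : Finset α) p B ≤
      bernoulliSubsetProb (Finset.univ : Finset α) p A +
        ∑ C' ∈ circs, bernoulliSubsetProb (Finset.univ : Finset α) p (Bad C') :=
    le_trans (bsp_mono p hp0 hp1 hcover) (bsp_le_add_biUnion p hp0 hp1 _ circs Bad)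
  -- per-circuit probability
  set d : Set α → ℕ := fun C' => (C'.toFinset \ C.toFinset).card with hd
  have hBad : ∀ C' ∈ circs, bernoulliSubsetProb (Finset.univ : Finset α) p (Bad C')
      = p ^ k * p ^ (d C') := by
    intro C' _
    have hcu : (C.toFinset ∪ C'.toFinset).card = d C' + k := by
      rw [Finset.union_comm, ← hkcard]
      exact (Finset.card_sdiff_add_card _ _).symm
    rw [hBadDef]
    rw [bsp_cube p (C.toFinset ∪ C'.toFinset), hcu, pow_add, mul_comm]
  -- distance bound
  have hdist : ∀ C' ∈ circs, (ℓ:ℝ) + 1 + (C'.ncard : ℝ) - (k:ℝ) ≤ 2 * (d C' : ℝ) := by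
    intro C' hC'mem
    obtain ⟨-, hC'circ, hC'ne⟩ := Finset.mem_filter.mp hC'mem
    obtain ⟨D, hDcirc, hDsub⟩ := circuit_symmDiff_contains_circuit hv hground hC'circ hC
      hC'ne C'.toFinset C.toFinset (Set.coe_toFinset _) (Set.coe_toFinset _)
    have hgD : ℓ < D.ncard := hgirth D hDcirc
    have hDle : D.ncard ≤ (C'.toFinset ∆ C.toFinset).card := by
      have := Set.ncard_le_ncard hDsub (Set.toFinite _)
      rwa [Set.ncard_coe_finset] at this
    have hsd : (C'.toFinset ∆ C.toFinset).card =
        (C'.toFinset \ C.toFinset).card + (C.toFinset \ C'.toFinset).card := by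
      have hu : C'.toFinset ∆ C.toFinset
          = (C'.toFinset \ C.toFinset) ∪ (C.toFinset \ C'.toFinset) := by
        ext x; simp only [Finset.mem_symmDiff, Finset.mem_union, Finset.mem_sdiff]
      rw [hu, Finset.card_union_of_disjoint disjoint_sdiff_sdiff]
    have h1 : (C'.toFinset \ C.toFinset).card + (C'.toFinset ∩ C.toFinset).card
        = C'.toFinset.card := Finset.card_sdiff_add_card_inter _ _
    have h2 : (C.toFinset \ C'.toFinset).card + (C.toFinset ∩ C'.toFinset).card
        = C.toFinset.card := Finset.card_sdiff_add_card_inter _ _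
    have h3 : (C'.toFinset ∩ C.toFinset).card = (C.toFinset ∩ C'.toFinset).card := by
      rw [Finset.inter_comm]
    have hn' : C'.toFinset.card = C'.ncard := (Set.ncard_eq_toFinset_card' C').symm
    have hineq : ℓ + 1 + C'.ncard ≤ 2 * d C' + k := by
      show ℓ + 1 + C'.ncard ≤ 2 * (C'.toFinset \ C.toFinset).card + k
      omega
    have hr : ((ℓ:ℝ) + 1 + (C'.ncard:ℝ)) ≤ 2*((d C':ℕ):ℝ) + (k:ℝ) := by
      exact_mod_cast hineq
    linarith
  -- buckets
  set buck : ℕ → Finset (Set α) := fun a =>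
    circs.filter (fun C' => a * ℓ < C'.ncard ∧ C'.ncard ≤ (a+1) * ℓ) with hbuck
  have hsubB : circs ⊆ (Finset.Icc 1 m).biUnion buck := by
    intro C' hC'mem
    obtain ⟨-, hC'circ, hC'ne⟩ := Finset.mem_filter.mp hC'mem
    have h1 : ℓ < C'.ncard := hgirth C' hC'circ
    have h2 : C'.ncard ≤ m := by
      have := Set.ncard_le_ncard (Set.subset_univ C') (Set.toFinite _)
      rwa [Set.ncard_univ, Nat.card_eq_fintype_card, hcard] at this
    obtain ⟨t1, ht1⟩ : ∃ t1, ℓ * ((C'.ncard - 1) / ℓ) = t1 := ⟨_, rfl⟩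
    have hdm := Nat.div_add_mod (C'.ncard - 1) ℓ
    have hmod : (C'.ncard - 1) % ℓ < ℓ := Nat.mod_lt _ hℓ
    rw [ht1] at hdm
    refine Finset.mem_biUnion.mpr ⟨(C'.ncard - 1) / ℓ, Finset.mem_Icc.mpr ⟨?_, ?_⟩,
      Finset.mem_filter.mpr ⟨hC'mem, ?_, ?_⟩⟩
    · exact (Nat.one_le_div_iff hℓ).mpr (by omega)
    · exact le_trans (Nat.div_le_self _ _) (by omega)
    · rw [mul_comm, ht1]; omega
    · rw [add_mul, one_mul, mul_comm ((C'.ncard - 1) / ℓ) ℓ, ht1]; omega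
  have hdisj : (↑(Finset.Icc 1 m) : Set ℕ).PairwiseDisjoint buck := by
    intro a _ b _ hab
    refine Finset.disjoint_left.mpr fun C' hmem1 hmem2 => ?_
    have g1 := (Finset.mem_filter.mp hmem1).2
    have g2 := (Finset.mem_filter.mp hmem2).2
    rcases Nat.lt_or_ge a b with h | h
    · have hle : (a+1) * ℓ ≤ b * ℓ := Nat.mul_le_mul_right _ (by omega)
      exact absurd (lt_of_lt_of_le g2.1 (le_trans g1.2 hle)) (lt_irrefl _)
    · have hba : b < a := lt_of_le_of_ne h (fun he => hab he.symm)
      have hle : (b+1) * ℓ ≤ a * ℓ := Nat.mul_le_mul_right _ (by omega)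
      exact absurd (lt_of_lt_of_le g1.1 (le_trans g2.2 hle)) (lt_irrefl _)
  -- sum bound
  set f : Set α → ℝ := fun C' => p ^ (d C') with hf
  have hsum1 : ∑ C' ∈ circs, f C' ≤ ∑ a ∈ Finset.Icc 1 m, ∑ C' ∈ buck a, f C' := by
    rw [← Finset.sum_biUnion hdisj]
    exact Finset.sum_le_sum_of_subset_of_nonneg hsubB (fun _ _ _ => pow_nonneg hp0 _)
  have hbucket : ∀ a ∈ Finset.Icc 1 m,
      ∑ C' ∈ buck a, f C' ≤ (m:ℝ) ^ (-(47.5 * κ)) := by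
    intro a ha
    obtain ⟨ha1, ham⟩ := Finset.mem_Icc.mp ha
    -- term bound
    have hterm : ∀ C' ∈ buck a, f C' ≤ (m:ℝ) ^ (-((50*(a:ℝ) - 0.5) * κ)) := by
      intro C' hmem
      obtain ⟨hmemc, hlow, hhigh⟩ := Finset.mem_filter.mp hmem
      have hdistC := hdist C' hmemc
      have hlow' : (a:ℝ) * ℓ + 1 ≤ (C'.ncard : ℝ) := by exact_mod_cast hlow
      have he : ((ℓ:ℝ)) * (((a:ℝ) - 0.01)/2) ≤ (d C' : ℝ) := by
        have hkr : (k:ℝ) ≤ 1.01 * ℓ := hk2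
        nlinarith
      have e1 : f C' = p ^ ((d C' : ℕ):ℝ) := by rw [hf, Real.rpow_natCast]
      have e2 : p ^ ((d C' : ℕ):ℝ) ≤ p ^ ((ℓ:ℝ) * (((a:ℝ) - 0.01)/2)) :=
        Real.rpow_le_rpow_of_exponent_ge hppos hp1 he
      have e3 : p ^ ((ℓ:ℝ) * (((a:ℝ) - 0.01)/2))
          = ((m:ℝ) ^ (-(100*κ))) ^ (((a:ℝ) - 0.01)/2) := by
        rw [Real.rpow_mul hp0, hpl']
      have e4 : ((m:ℝ) ^ (-(100*κ))) ^ (((a:ℝ) - 0.01)/2)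
          = (m:ℝ) ^ (-((50*(a:ℝ) - 0.5) * κ)) := by
        rw [← Real.rpow_mul hm0.le]
        ring_nf
      rw [e1, ← e4, ← e3]
      exact e2
    -- cardinality bound
    have hcard1 : ((buck a).card : ℝ) ≤ (m:ℝ) ^ (c * ((a:ℝ)+1)) := by
      have hsub2 : (↑(buck a) : Set (Set α)) ⊆
          {C' : Set α | IsCircuitOf M C' ∧ C'.ncard ≤ (a+1) * ℓ} := by
        intro C' hmem
        have hmem' := Finset.mem_filter.mp hmem
        exact ⟨(Finset.mem_filter.mp hmem'.1).2.1, hmem'.2.2⟩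
      have hle := Set.ncard_le_ncard hsub2 (Set.toFinite _)
      rw [Set.ncard_coe_finset] at hle
      calc ((buck a).card : ℝ) ≤
          (({C' : Set α | IsCircuitOf M C' ∧ C'.ncard ≤ (a+1) * ℓ}).ncard : ℝ) := by
            exact_mod_cast hle
        _ ≤ (m:ℝ) ^ (c * ((a:ℕ)+1 : ℕ)) := hcount (a+1) (by omega)
        _ = (m:ℝ) ^ (c * ((a:ℝ)+1)) := by push_cast; ring_nf
    calc ∑ C' ∈ buck a, f C'
        ≤ (buck a).card • ((m:ℝ) ^ (-((50*(a:ℝ) - 0.5) * κ))) :=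
          Finset.sum_le_card_nsmul _ _ _ hterm
      _ = ((buck a).card : ℝ) * (m:ℝ) ^ (-((50*(a:ℝ) - 0.5) * κ)) := by
          rw [nsmul_eq_mul]
      _ ≤ (m:ℝ) ^ (c * ((a:ℝ)+1)) * (m:ℝ) ^ (-((50*(a:ℝ) - 0.5) * κ)) := by
          exact mul_le_mul_of_nonneg_right hcard1 (Real.rpow_nonneg hm0.le _)
      _ ≤ (m:ℝ) ^ (κ * ((a:ℝ)+1)) * (m:ℝ) ^ (-((50*(a:ℝ) - 0.5) * κ)) := by
          refine mul_le_mul_of_nonneg_right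
            (Real.rpow_le_rpow_of_exponent_le hm1 ?_) (Real.rpow_nonneg hm0.le _)
          have : (0:ℝ) ≤ (a:ℝ) + 1 := by positivity
          nlinarith
      _ = (m:ℝ) ^ (κ * ((a:ℝ)+1) + (-((50*(a:ℝ) - 0.5) * κ))) := by
          rw [← Real.rpow_add hm0]
      _ ≤ (m:ℝ) ^ (-(47.5 * κ)) := by
          refine Real.rpow_le_rpow_of_exponent_le hm1 ?_
          have ha1' : (1:ℝ) ≤ (a:ℝ) := by exact_mod_cast ha1
          nlinarith
  have hsum2 : ∑ C' ∈ circs, f C' ≤ 1/2 := by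
    have hstep : ∑ a ∈ Finset.Icc 1 m, ∑ C' ∈ buck a, f C'
        ≤ ∑ a ∈ Finset.Icc 1 m, (m:ℝ) ^ (-(47.5 * κ)) := Finset.sum_le_sum hbucket
    have hconst : ∑ a ∈ Finset.Icc 1 m, (m:ℝ) ^ (-(47.5 * κ))
        = (m:ℝ) * (m:ℝ) ^ (-(47.5 * κ)) := by
      rw [Finset.sum_const, Nat.card_Icc, nsmul_eq_mul]
      norm_num
    have hfinal : (m:ℝ) * (m:ℝ) ^ (-(47.5 * κ)) ≤ 1/2 := by
      have e1 : (m:ℝ) * (m:ℝ) ^ (-(47.5 * κ)) = (m:ℝ) ^ ((1:ℝ) + (-(47.5 * κ))) := by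
        rw [Real.rpow_add hm0, Real.rpow_one]
      have e2 : (m:ℝ) ^ ((1:ℝ) + (-(47.5 * κ))) ≤ (m:ℝ) ^ (-(46.5:ℝ)) := by
        refine Real.rpow_le_rpow_of_exponent_le hm1 ?_
        linarith
      have e3 : (m:ℝ) ^ (-(46.5:ℝ)) ≤ (2:ℝ) ^ (-(46.5:ℝ)) := by
        rw [Real.rpow_neg hm0.le, Real.rpow_neg (by norm_num : (0:ℝ) ≤ 2)]
        refine inv_anti₀ (by positivity) ?_
        exact Real.rpow_le_rpow (by norm_num) hm2 (by norm_num)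
      have e4 : (2:ℝ) ^ (-(46.5:ℝ)) ≤ 1/2 := by
        rw [Real.rpow_neg (by norm_num : (0:ℝ) ≤ 2), one_div]
        refine inv_anti₀ (by norm_num) ?_
        calc (2:ℝ) = (2:ℝ) ^ (1:ℝ) := by rw [Real.rpow_one]
          _ ≤ (2:ℝ) ^ (46.5:ℝ) :=
            Real.rpow_le_rpow_of_exponent_le (by norm_num) (by norm_num)
      linarith
    linarith [hsum1]
  -- lower bound on p^k
  have hpk : (m:ℝ) ^ (-(101 * κ)) ≤ p ^ k := by
    have e1 : p ^ k = p ^ ((k:ℕ):ℝ) := by rw [Real.rpow_natCast]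
    have e2 : p ^ (((k:ℕ)):ℝ) ≥ p ^ ((1.01:ℝ) * ℓ) :=
      Real.rpow_le_rpow_of_exponent_ge hppos hp1 hk2
    have e3 : p ^ ((1.01:ℝ) * ℓ) = ((m:ℝ) ^ (-(100*κ))) ^ (1.01:ℝ) := by
      rw [mul_comm, Real.rpow_mul hp0, hpl']
    have e4 : ((m:ℝ) ^ (-(100*κ))) ^ (1.01:ℝ) = (m:ℝ) ^ (-(101 * κ)) := by
      rw [← Real.rpow_mul hm0.le]
      ring_nf
    rw [e1, ← e4, ← e3]
    exact e2
  -- assemble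
  have hsumBad : ∑ C' ∈ circs, bernoulliSubsetProb (Finset.univ : Finset α) p (Bad C')
      = p ^ k * ∑ C' ∈ circs, f C' := by
    rw [Finset.mul_sum]
    exact Finset.sum_congr rfl hBad
  have hpknn : (0:ℝ) ≤ p ^ k := pow_nonneg hp0 k
  have hgoal1 : p ^ k * (1/2) ≤ bernoulliSubsetProb (Finset.univ : Finset α) p A := by
    rw [hB, hsumBad] at hub
    nlinarith
  have hgoal2 : 1 / (2 * (m:ℝ) ^ (101 * κ)) = (m:ℝ) ^ (-(101 * κ)) * (1/2) := by
    rw [Real.rpow_neg hm0.le]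
    ring
  have : (m:ℝ) ^ (-(101 * κ)) * (1/2) ≤ p ^ k * (1/2) := by linarith
  rw [hgoal2]
  exact le_trans this hgoal1
end
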